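/- arXiv:2009.04585 — 8 statements merged into one kernel-verified Lean document; each statement's English description precedes it below -/
import Mathlib

section
/- Let v_1, …, v_r ∈ ℤ^d be nonzero vectors whose set of nonnegative real combinations σ = {Σ λ_i v_i : λ_i ≥ 0} is a salient and full-dimensional convex cone in ℝ^d, and let ν: ℤ^r → ℤ^d be the homomorphism with ν(e_i) = v_i for the standard basis e_1, …, e_r of ℤ^r. Let P = {u ∈ Hom(ℤ^d, ℤ) : u(x) ≥ 0 for all x ∈ σ} and F = {φ ∈ Hom(ℤ^r, ℤ) : φ(e_i) ≥ 0 for all i}. Then for every φ ∈ F there exists φ' ∈ F such that φ + φ' lies in the image of P under the dual map ν*: Hom(ℤ^d, ℤ) → Hom(ℤ^r, ℤ), u ↦ u∘ν. -/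
/-!
Salience and `v i ≠ 0` keep `0` out of the convex hull of the generators, so Hahn–Banach gives
a real functional strictly positive on every `v i`. Rounding up a large multiple of its
coefficients gives an integral `u` with `u (v i) ≥ 1`; hence `u ∈ P`, and with
`K = ∑ i, φ (e i)` the functional `φ' = K • u ∘ ν - φ` is nonnegative on every `e i`.
-/

open Filter

theorem LinearMap.apply_eq_sum_smul_apply_single {R M κ : Type*} [CommSemiring R]
    [AddCommMonoid M] [Module R M] [Fintype κ] [DecidableEq κ]
    (f : (κ → R) →ₗ[R] M) (x : κ → R) : f x = ∑ j, x j • f (Pi.single j 1) := by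
  conv_lhs => rw [pi_eq_sum_univ' x, map_sum]
  simp only [map_smul]

def nonnegCombinations {ι E : Type*} [Fintype ι] [AddCommGroup E] [Module ℝ E]
    (w : ι → E) : Set E :=
  {x | ∃ c : ι → ℝ, (∀ i, 0 ≤ c i) ∧ x = ∑ i, c i • w i}

section SalientCone

variable {ι E : Type*} [Fintype ι] [AddCommGroup E] [Module ℝ E] {w : ι → E}

theorem sum_smul_ne_zero_of_salient (hw : ∀ i, w i ≠ 0)
    (hsal : ∀ x ∈ nonnegCombinations w, -x ∈ nonnegCombinations w → x = 0)
    {c : ι → ℝ} (hc : ∀ i, 0 ≤ c i) (hc0 : c ≠ 0) : ∑ i, c i • w i ≠ 0 := by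
  classical
  intro hsum
  obtain ⟨i₀, hi₀⟩ := Function.ne_iff.1 hc0
  have hmem : c i₀ • w i₀ ∈ nonnegCombinations w :=
    ⟨Pi.single i₀ (c i₀), fun i => by by_cases h : i = i₀ <;> simp [h, hc i₀],
      by simp [Pi.single_apply]⟩
  have hneg : -(c i₀ • w i₀) ∈ nonnegCombinations w := by
    refine ⟨c - Pi.single i₀ (c i₀), fun i => ?_, ?_⟩
    · by_cases h : i = i₀ <;> simp [h, hc i]
    · simp only [Pi.sub_apply, sub_smul, Finset.sum_sub_distrib, hsum]
      simp [Pi.single_apply]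
  exact smul_ne_zero hi₀ (hw i₀) (hsal _ hmem hneg)

theorem exists_strongDual_pos_of_salient [TopologicalSpace E] [IsTopologicalAddGroup E]
    [ContinuousSMul ℝ E] [T2Space E] [LocallyConvexSpace ℝ E] (hw : ∀ i, w i ≠ 0)
    (hsal : ∀ x ∈ nonnegCombinations w, -x ∈ nonnegCombinations w → x = 0) :
    ∃ f : StrongDual ℝ E, ∀ i, 0 < f (w i) := by
  classical
  set L := Fintype.linearCombination ℝ w
  have hconvex : Convex ℝ (L '' stdSimplex ℝ ι) := (convex_stdSimplex ℝ ι).linear_image L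
  have hclosed : IsClosed (L '' stdSimplex ℝ ι) :=
    ((isCompact_stdSimplex ℝ ι).image L.continuous_of_finiteDimensional).isClosed
  have hzero : (0 : E) ∉ L '' stdSimplex ℝ ι := by
    rintro ⟨c, ⟨hc, hc1⟩, hLc⟩
    have hc0 : c ≠ 0 := by
      rintro rfl
      simp at hc1
    exact sum_smul_ne_zero_of_salient hw hsal hc hc0
      ((Fintype.linearCombination_apply ℝ w c).symm.trans hLc)
  obtain ⟨f, u, hfu, hu⟩ := geometric_hahn_banach_point_closed hconvex hclosed hzero
  refine ⟨f, fun i => (map_zero f ▸ hfu).trans 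
    (hu _ ⟨Pi.single i 1, single_mem_stdSimplex ℝ i, ?_⟩)⟩
  simp [L]

end SalientCone

theorem mul_sub_abs_le_mul_ceil (a : ℤ) (t : ℝ) :
    (a : ℝ) * t - |(a : ℝ)| ≤ a * ⌈t⌉ := by
  have h₁ : t ≤ ⌈t⌉ := Int.le_ceil t
  have h₂ : (⌈t⌉ : ℝ) < t + 1 := Int.ceil_lt_add_one t
  rcases le_or_gt 0 (a : ℝ) with ha | ha
  · nlinarith [abs_of_nonneg ha]
  · nlinarith [abs_of_neg ha]

theorem eventually_pos_sum_mul_ceil {κ : Type*} [Fintype κ] (a : κ → ℤ) (y : κ → ℝ)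
    (h : 0 < ∑ j, (a j : ℝ) * y j) :
    ∀ᶠ N : ℕ in atTop, 0 < ∑ j, a j * ⌈(N : ℝ) * y j⌉ := by
  have htendsto :
      Tendsto (fun N : ℕ => (N : ℝ) * ∑ j, (a j : ℝ) * y j - ∑ j, |(a j : ℝ)|)
        atTop atTop :=
    tendsto_atTop_add_const_right _ _ (tendsto_natCast_atTop_atTop.atTop_mul_const h)
  filter_upwards [htendsto.eventually_gt_atTop 0] with N hN
  have hround : (N : ℝ) * ∑ j, (a j : ℝ) * y j - ∑ j, |(a j : ℝ)|
      ≤ ∑ j, (a j : ℝ) * ⌈(N : ℝ) * y j⌉ := by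
    rw [Finset.mul_sum, ← Finset.sum_sub_distrib]
    refine Finset.sum_le_sum fun j _ => ?_
    linarith [mul_sub_abs_le_mul_ceil (a j) (N * y j)]
  exact_mod_cast hN.trans_le hround

theorem exists_int_linearMap_pos_of_real {ι κ : Type*} [Finite ι] [Fintype κ]
    (v : ι → κ → ℤ) (y : κ → ℝ) (h : ∀ i, 0 < ∑ j, (v i j : ℝ) * y j) :
    ∃ u : (κ → ℤ) →ₗ[ℤ] ℤ, ∀ i, 0 < u (v i) := by
  obtain ⟨N, hN⟩ :=
    (eventually_all.2 fun i => eventually_pos_sum_mul_ceil (v i) y (h i)).exists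
  exact ⟨Fintype.linearCombination ℤ fun j => ⌈(N : ℝ) * y j⌉, fun i => by
    simpa [Fintype.linearCombination_apply] using hN i⟩

theorem sum_apply_single_mul_nonneg_of_mem_nonnegCombinations {ι κ : Type*} [Fintype ι]
    [Fintype κ] [DecidableEq κ] (u : (κ → ℤ) →ₗ[ℤ] ℤ) (v : ι → κ → ℤ)
    (hu : ∀ i, 0 ≤ u (v i)) {x : κ → ℝ}
    (hx : x ∈ nonnegCombinations fun i j => (v i j : ℝ)) :
    0 ≤ ∑ j, (u (Pi.single j 1) : ℝ) * x j := by
  obtain ⟨c, hc, rfl⟩ := hx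
  have hexpand : ∑ j, (u (Pi.single j 1) : ℝ) * (∑ i, c i • fun j => (v i j : ℝ)) j
      = ∑ i, c i * u (v i) := by
    simp_rw [u.apply_eq_sum_smul_apply_single (v _), Finset.sum_apply, Pi.smul_apply,
      smul_eq_mul, Finset.mul_sum, Int.cast_sum, Int.cast_mul, Finset.mul_sum]
    rw [Finset.sum_comm]
    exact Finset.sum_congr rfl fun i _ => Finset.sum_congr rfl fun j _ => by ring
  rw [hexpand]
  exact Finset.sum_nonneg fun i _ => mul_nonneg (hc i) (Int.cast_nonneg (hu i))

theorem stmt0_general (d r : ℕ)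
    (v : Fin r → Fin d → ℤ) (hv : ∀ i, v i ≠ 0)
    (σ : Set (Fin d → ℝ))
    (hσ : σ = {x | ∃ c : Fin r → ℝ, (∀ i, 0 ≤ c i) ∧
      x = ∑ i, c i • (fun j => (v i j : ℝ))})
    (hsalient : ∀ x ∈ σ, -x ∈ σ → x = 0)
    (ν : (Fin r → ℤ) →ₗ[ℤ] (Fin d → ℤ))
    (hν : ∀ i, ν (Pi.single i 1) = v i)
    (P : Set ((Fin d → ℤ) →ₗ[ℤ] ℤ))
    (hP : P = {u | ∀ x ∈ σ, 0 ≤ ∑ j, (u (Pi.single j 1) : ℝ) * x j})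
    (F : Set ((Fin r → ℤ) →ₗ[ℤ] ℤ))
    (hF : F = {φ | ∀ i, 0 ≤ φ (Pi.single i 1)}) :
    ∀ φ ∈ F, ∃ φ' ∈ F, ∃ u ∈ P, φ + φ' = u.comp ν := by
  intro φ hφ
  subst hσ hP hF
  have hw : ∀ i, (fun j => (v i j : ℝ)) ≠ 0 := fun i h =>
    hv i (funext fun j => by simpa using congrFun h j)
  obtain ⟨f, hf⟩ := exists_strongDual_pos_of_salient hw hsalient
  obtain ⟨u, hu⟩ := exists_int_linearMap_pos_of_real v (fun j => f (Pi.single j 1)) fun i => by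
    have hfi := f.toLinearMap.apply_eq_sum_smul_apply_single fun j => (v i j : ℝ)
    simp only [ContinuousLinearMap.coe_coe, smul_eq_mul] at hfi
    exact hfi ▸ hf i
  set K := ∑ i, φ (Pi.single i 1)
  have hK : ∀ i, φ (Pi.single i 1) ≤ K := fun i =>
    Finset.single_le_sum (fun j _ => hφ j) (Finset.mem_univ i)
  refine ⟨(K • u).comp ν - φ, fun i => ?_, K • u, fun x hx => ?_, by abel⟩
  · simp only [LinearMap.sub_apply, LinearMap.comp_apply, hν, LinearMap.smul_apply, smul_eq_mul]
    nlinarith [hK i, hφ i, hu i]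
  · exact sum_apply_single_mul_nonneg_of_mem_nonnegCombinations _ v
      (fun i => smul_nonneg ((hφ i).trans (hK i)) (hu i).le) hx

/-- For a salient full-dimensional cone `σ` generated by nonzero integer
vectors `v₁, …, v_r`, every `φ` in the dual monoid `F` of the positive orthant admits
`φ' ∈ F` with `φ + φ'` in the image of `P = σ^∨ ∩ M` under `ν*`. -/
theorem stmt0 (d r : ℕ)
    (v : Fin r → Fin d → ℤ) (hv : ∀ i, v i ≠ 0)
    (σ : Set (Fin d → ℝ))
    (hσ : σ = {x | ∃ c : Fin r → ℝ, (∀ i, 0 ≤ c i) ∧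
      x = ∑ i, c i • (fun j => (v i j : ℝ))})
    (hsalient : ∀ x ∈ σ, -x ∈ σ → x = 0)
    (hfull : Submodule.span ℝ σ = ⊤)
    (ν : (Fin r → ℤ) →ₗ[ℤ] (Fin d → ℤ))
    (hν : ∀ i, ν (Pi.single i 1) = v i)
    (P : Set ((Fin d → ℤ) →ₗ[ℤ] ℤ))
    (hP : P = {u | ∀ x ∈ σ, 0 ≤ ∑ j, (u (Pi.single j 1) : ℝ) * x j})
    (F : Set ((Fin r → ℤ) →ₗ[ℤ] ℤ))
    (hF : F = {φ | ∀ i, 0 ≤ φ (Pi.single i 1)}) :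
    ∀ φ ∈ F, ∃ φ' ∈ F, ∃ u ∈ P, φ + φ' = u.comp ν :=
  stmt0_general d r v hv σ hσ hsalient ν hν P hP F hF
end

section
/- Let A be a free ℤ-module of finite rank and let v_1, …, v_r ∈ A be elements whose images span the ℚ-vector space A ⊗_ℤ ℚ. Then the following are equivalent: (1) for every subset S ⊆ {1, …, r}, the quotient A / Σ_{i∈S} ℤ v_i is torsion-free; (2) for every subset S ⊆ {1, …, r}, if {v_i : i ∈ S} is a ℚ-basis of A ⊗_ℤ ℚ, then it is a ℤ-basis of A. -/
/-!
Torsion-freeness of `A ⧸ span ℤ (v '' S)` says that the span is saturated: `c • x` in it with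
`c ≠ 0` forces `x` in it. As `A` embeds in `ℚ ⊗ A`, an element whose image lies in the ℚ-span of
a family has a nonzero multiple in its ℤ-span. So if all quotients are torsion-free, a subfamily
spanning over ℚ spans over ℤ (and ℚ-independence always gives ℤ-independence). Conversely, a
maximal ℚ-independent part `U` of `S` extends to a ℚ-basis `T` of the whole family, which is then
a ℤ-basis of `A` by hypothesis; the span of the sub-basis `U` is saturated, and every `v i` with
`i ∈ S` has a multiple in it, so `span ℤ (v '' S) = span ℤ (v '' U)`.
-/

open scoped TensorProduct
open Submodule Set

theorem Submodule.noZeroSMulDivisors_quotient_iff {R M : Type*} [CommRing R] [AddCommGroup M]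
    [Module R M] (N : Submodule R M) :
    NoZeroSMulDivisors R (M ⧸ N) ↔ ∀ (c : R) (x : M), c ≠ 0 → c • x ∈ N → x ∈ N := by
  refine ⟨fun h c x hc hcx ↦ ?_, fun h ↦ ⟨fun {c} {q} hcq ↦ ?_⟩⟩
  · have : c • N.mkQ x = 0 := by rwa [← map_smul, mkQ_apply, Quotient.mk_eq_zero]
    rw [← Quotient.mk_eq_zero N, ← mkQ_apply]
    exact (h.eq_zero_or_eq_zero_of_smul_eq_zero this).resolve_left hc
  · obtain ⟨x, rfl⟩ := N.mkQ_surjective q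
    rw [← map_smul, mkQ_apply, Quotient.mk_eq_zero] at hcq
    rw [or_iff_not_imp_left, mkQ_apply, Quotient.mk_eq_zero]
    exact fun hc ↦ h c x hc hcq

theorem Module.Basis.noZeroSMulDivisors_quotient_span_image {ι R M : Type*} [CommRing R]
    [IsDomain R] [AddCommGroup M] [Module R M] (b : Module.Basis ι R M) (s : Set ι) :
    NoZeroSMulDivisors R (M ⧸ span R (b '' s)) := by
  rw [noZeroSMulDivisors_quotient_iff]
  intro c x hc hcx
  rwa [b.mem_span_image, map_smul, Finsupp.support_smul_eq hc, ← b.mem_span_image] at hcx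

theorem LinearIndepOn.noZeroSMulDivisors_quotient_span_image {ι R M : Type*} [CommRing R]
    [IsDomain R] [AddCommGroup M] [Module R M] {v : ι → M} {T U : Set ι}
    (hind : LinearIndepOn R v T) (hspan : span R (v '' T) = ⊤) (hUT : U ⊆ T) :
    NoZeroSMulDivisors R (M ⧸ span R (v '' U)) := by
  obtain ⟨b, hb⟩ : ∃ b : Module.Basis T R M, ⇑b = fun i : T ↦ v i :=
    ⟨.mk hind (by rw [← image_eq_range, hspan]), Module.Basis.coe_mk _ _⟩
  have hU : v '' U = b '' (Subtype.val ⁻¹' U) := by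
    rw [hb, ← image_image v Subtype.val, Subtype.image_preimage_coe, inter_eq_right.mpr hUT]
  rw [hU]
  exact b.noZeroSMulDivisors_quotient_span_image _

section Localization

variable {R A M N : Type*} [CommRing R] [CommRing A] [Algebra R A] [AddCommGroup M] [Module R M]
  [AddCommGroup N] [Module R N] [Module A N] [IsScalarTower R A N]
  (S : Submonoid R) [IsLocalization S A] (f : M →ₗ[R] N) [IsLocalizedModule S f]

theorem IsLocalizedModule.exists_smul_mem_span_of_mem_span (hf : Function.Injective f)
    {X : Set M} {x : M} (hx : f x ∈ span A (f '' X)) :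
    ∃ s ∈ S, s • x ∈ span R X := by
  rw [← localized'_span A S f, mem_localized'] at hx
  obtain ⟨m, hm, s, hmx⟩ := hx
  rw [IsLocalizedModule.mk'_eq_iff, ← LinearMap.map_smul_of_tower] at hmx
  exact ⟨s, s.2, hf hmx ▸ hm⟩

end Localization

theorem exists_basis_extending_spanning_subset {ι K V : Type*} [DivisionRing K] [AddCommGroup V]
    [Module K V] {w : ι → V} (hw : span K (range w) = ⊤) (S : Set ι) :
    ∃ U ⊆ S, ∃ T, U ⊆ T ∧ LinearIndepOn K w T ∧ span K (w '' T) = ⊤ ∧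
      w '' S ⊆ span K (w '' U) := by
  obtain ⟨U, hUS, -, hSU, hU⟩ := exists_linearIndepOn_extension (linearIndepOn_empty K w)
    (empty_subset S)
  obtain ⟨T, -, hUT, hT, hTind⟩ := exists_linearIndepOn_extension hU (subset_univ U)
  refine ⟨U, hUS, T, hUT, hTind, ?_, hSU⟩
  rw [eq_top_iff, ← hw, ← image_univ]
  exact span_le.mpr hT

theorem IsLocalizedModule.injective_of_isTorsionFree {R M N : Type*} [CommRing R]
    [AddCommGroup M] [Module R M] [Module.IsTorsionFree R M] [AddCommGroup N] [Module R N]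
    (f : M →ₗ[R] N) [IsLocalizedModule (nonZeroDivisors R) f] : Function.Injective f :=
  (injective_iff_isRegular _ f).mpr fun c ↦
    (isRegular_iff_mem_nonZeroDivisors.mpr c.2).isSMulRegular

section FractionField

variable {R K M N : Type*} [CommRing R] [IsDomain R] [Field K] [Algebra R K] [IsFractionRing R K]
  [AddCommGroup M] [Module R M] [Module.IsTorsionFree R M]
  [AddCommGroup N] [Module R N] [Module K N] [IsScalarTower R K N]
  (f : M →ₗ[R] N) [IsLocalizedModule (nonZeroDivisors R) f]

theorem IsLocalizedModule.mem_span_of_mem_span {X : Set M}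
    (hX : NoZeroSMulDivisors R (M ⧸ span R X)) {x : M} (hx : f x ∈ span K (f '' X)) :
    x ∈ span R X := by
  obtain ⟨c, hc, hcx⟩ :=
    exists_smul_mem_span_of_mem_span (nonZeroDivisors R) f (injective_of_isTorsionFree f) hx
  exact (noZeroSMulDivisors_quotient_iff _).mp hX c x (nonZeroDivisors.ne_zero hc) hcx

theorem IsLocalizedModule.span_eq_top_of_span_eq_top {X : Set M}
    (hX : NoZeroSMulDivisors R (M ⧸ span R X)) (htop : span K (f '' X) = ⊤) :
    span R X = ⊤ :=
  eq_top_iff.mpr fun _ _ ↦ mem_span_of_mem_span f hX (htop ▸ mem_top)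

variable {ι : Type*} {v : ι → M}

theorem IsLocalizedModule.noZeroSMulDivisors_quotient_span_image
    (hspan : span K (range (f ∘ v)) = ⊤)
    (h : ∀ T : Set ι, LinearIndepOn K (f ∘ v) T ∧ span K ((f ∘ v) '' T) = ⊤ →
      LinearIndepOn R v T ∧ span R (v '' T) = ⊤) (S : Set ι) :
    NoZeroSMulDivisors R (M ⧸ span R (v '' S)) := by
  obtain ⟨U, hUS, T, hUT, hTind, hTspan, hSU⟩ := exists_basis_extending_spanning_subset hspan S
  obtain ⟨hTindR, hTspanR⟩ := h T ⟨hTind, hTspan⟩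
  have hU := hTindR.noZeroSMulDivisors_quotient_span_image hTspanR hUT
  have hSU : span R (v '' S) = span R (v '' U) := by
    refine le_antisymm (span_le.mpr ?_) (span_mono (image_mono hUS))
    rintro _ ⟨i, hi, rfl⟩
    refine mem_span_of_mem_span (K := K) f hU ?_
    rw [image_image]
    exact hSU (mem_image_of_mem _ hi)
  rwa [hSU]

theorem IsLocalizedModule.forall_noZeroSMulDivisors_quotient_span_image_iff
    (hspan : span K (range (f ∘ v)) = ⊤) :
    (∀ S : Set ι, NoZeroSMulDivisors R (M ⧸ span R (v '' S))) ↔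
      ∀ S : Set ι, LinearIndepOn K (f ∘ v) S ∧ span K ((f ∘ v) '' S) = ⊤ →
        LinearIndepOn R v S ∧ span R (v '' S) = ⊤ := by
  refine ⟨fun h S ⟨hind, htop⟩ ↦ ⟨?_, ?_⟩, noZeroSMulDivisors_quotient_span_image f hspan⟩
  · exact (LinearIndependent.restrict_scalars' (K := K) R hind).of_comp f
  · rw [image_comp] at htop
    exact span_eq_top_of_span_eq_top f (h S) htop

end FractionField

theorem stmt4_general (A : Type*)
    [AddCommGroup A] [Module ℤ A] [Module.Free ℤ A]
    (r : ℕ) (v : Fin r → A)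
    (hspan : Submodule.span ℚ
      (Set.range fun i => ((1 : ℚ) ⊗ₜ[ℤ] v i : ℚ ⊗[ℤ] A)) = ⊤) :
    (∀ S : Set (Fin r),
        NoZeroSMulDivisors ℤ (A ⧸ Submodule.span ℤ (v '' S))) ↔
      (∀ S : Set (Fin r),
        (LinearIndependent ℚ (fun i : S => ((1 : ℚ) ⊗ₜ[ℤ] v i : ℚ ⊗[ℤ] A)) ∧
          Submodule.span ℚ
            (Set.range fun i : S => ((1 : ℚ) ⊗ₜ[ℤ] v i : ℚ ⊗[ℤ] A)) = ⊤) →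
        (LinearIndependent ℤ (fun i : S => v i) ∧
          Submodule.span ℤ (v '' S) = ⊤)) := by
  have key := IsLocalizedModule.forall_noZeroSMulDivisors_quotient_span_image_iff (K := ℚ)
    (TensorProduct.mk ℤ ℚ A 1) (v := v) hspan
  -- the `NoZeroSMulDivisors` of the statement uses the `zsmul` of the additive group
  convert key using 4 with S
  · ext n x
    exact (int_smul_eq_zsmul (Submodule.Quotient.module _) n x).symm
  · rfl
  · rw [image_eq_range]
    rfl
  · rfl

/-- For a finite-rank free ℤ-module `A` and `v₁, …, v_r ∈ A` whose
images span `ℚ ⊗ A`, all quotients `A / Σ_{i∈S} ℤ vᵢ` are torsion-free iff every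
subfamily that is a ℚ-basis of `ℚ ⊗ A` is a ℤ-basis of `A`. -/
theorem stmt4 (A : Type*)
    [AddCommGroup A] [Module ℤ A] [Module.Free ℤ A] [Module.Finite ℤ A]
    (r : ℕ) (v : Fin r → A)
    (hspan : Submodule.span ℚ
      (Set.range fun i => ((1 : ℚ) ⊗ₜ[ℤ] v i : ℚ ⊗[ℤ] A)) = ⊤) :
    (∀ S : Set (Fin r),
        NoZeroSMulDivisors ℤ (A ⧸ Submodule.span ℤ (v '' S))) ↔
      (∀ S : Set (Fin r),
        (LinearIndependent ℚ (fun i : S => ((1 : ℚ) ⊗ₜ[ℤ] v i : ℚ ⊗[ℤ] A)) ∧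
          Submodule.span ℚ
            (Set.range fun i : S => ((1 : ℚ) ⊗ₜ[ℤ] v i : ℚ ⊗[ℤ] A)) = ⊤) →
        (LinearIndependent ℤ (fun i : S => v i) ∧
          Submodule.span ℤ (v '' S) = ⊤)) :=
  stmt4_general A r v hspan
end

section
/- Let ν: ℤ^r → ℤ^d be a surjective homomorphism, let ν*: Hom(ℤ^d, ℤ) → Hom(ℤ^r, ℤ) be its dual, let A = Hom(ℤ^r, ℤ) / ν*(Hom(ℤ^d, ℤ)) with quotient map α (A is a free ℤ-module of rank r − d), and set w_i = α(e_i*), where e_1*, …, e_r* is the basis of Hom(ℤ^r, ℤ) dual to the standard basis e_1, …, e_r of ℤ^r. Then the following are equivalent: (1) for every subset S ⊆ {1, …, r}, if {ν(e_i) : i ∈ S} is linearly independent then it can be extended to a ℤ-basis of ℤ^d; (2) for every subset S ⊆ {1, …, r}, if {w_i : i ∈ S} is linearly independent then it can be extended to a ℤ-basis of A. -/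
/-!
Call a submodule saturated when the quotient by it is torsion-free. Over a PID, a linearly
independent family extends to a basis of a finite module iff its span is saturated, and passing to
a maximal independent subfamily shows that both conditions of the theorem say that the span of
every subfamily is saturated. For a map `g` of finite free modules, `range g` is saturated iff
`range g.dualMap` is: a saturated range is a direct summand, so its dual range is the annihilator
of `ker g`, and dualizing twice gives the converse. Applied to the restriction of `ν` to the
coordinate submodule spanned by the `eᵢ`, `i ∈ T`, whose annihilator is spanned by the `eⱼ*`,
`j ∉ T`, this shows that the span of the `ν(eᵢ)`, `i ∈ T`, is saturated iff the span of the
`wⱼ`, `j ∉ T`, is.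
-/

open Module Submodule LinearMap

namespace Submodule

variable {R M N : Type*} [CommRing R] [AddCommGroup M] [Module R M] [AddCommGroup N] [Module R N]

def IsSaturated (P : Submodule R M) : Prop :=
  ∀ (a : R) (x : M), a ≠ 0 → a • x ∈ P → x ∈ P

theorem isSaturated_comap_iff {f : M →ₗ[R] N} (hf : Function.Surjective f) {Q : Submodule R N} :
    (Q.comap f).IsSaturated ↔ Q.IsSaturated := by
  refine ⟨fun h a y ha hy => ?_, fun h a x ha hx => h a (f x) ha (by simpa using hx)⟩
  obtain ⟨x, rfl⟩ := hf y
  exact h a x ha (by simpa using hy)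

theorem isSaturated_map_iff_of_surjective {f : M →ₗ[R] N} (hf : Function.Surjective f)
    {P : Submodule R M} : (P.map f).IsSaturated ↔ (P ⊔ ker f).IsSaturated := by
  rw [← isSaturated_comap_iff hf, comap_map_eq]

theorem isSaturated_map_equiv_iff (e : M ≃ₗ[R] N) {P : Submodule R M} :
    (P.map (e : M →ₗ[R] N)).IsSaturated ↔ P.IsSaturated := by
  rw [map_equiv_eq_comap_symm, isSaturated_comap_iff e.symm.surjective]

theorem forall_isSaturated_span_image_iff {ι : Type*} (x : ι → M) :
    (∀ S : Set ι, LinearIndepOn R x S → (span R (x '' S)).IsSaturated) ↔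
      ∀ T : Set ι, (span R (x '' T)).IsSaturated := by
  refine ⟨fun h T => ?_, fun h S _ => h S⟩
  obtain ⟨s, hs, hmax⟩ := exists_maximal_linearIndepOn R (x ∘ ((↑) : T → ι))
  have hsat := h _ (hs.image_of_comp _ _)
  suffices span R (x '' T) = span R (x '' ((↑) '' s)) from this ▸ hsat
  refine le_antisymm (span_le.2 ?_) (span_mono (Set.image_mono (Subtype.coe_image_subset T s)))
  rintro _ ⟨t, ht, rfl⟩
  by_cases hts : (⟨t, ht⟩ : T) ∈ s
  · exact subset_span ⟨t, ⟨_, hts, rfl⟩, rfl⟩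
  · obtain ⟨a, ha, hat⟩ := hmax _ hts
    exact hsat a _ ha (by rwa [Set.image_comp] at hat)

section IsDomain

variable [IsDomain R]

theorem IsSaturated.isTorsionFree_quotient {P : Submodule R M} (hP : P.IsSaturated) :
    IsTorsionFree R (M ⧸ P) := by
  refine .of_smul_eq_zero fun a y hay => or_iff_not_imp_left.2 fun ha => ?_
  obtain ⟨x, rfl⟩ := P.mkQ_surjective y
  rw [← map_smul, mkQ_apply, Quotient.mk_eq_zero] at hay
  exact (Quotient.mk_eq_zero P).2 (hP a x ha hay)

theorem isSaturated_dualAnnihilator (K : Submodule R M) : K.dualAnnihilator.IsSaturated := by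
  intro a φ ha hφ
  rw [mem_dualAnnihilator] at hφ ⊢
  exact fun x hx => (mul_eq_zero.1 (hφ x hx)).resolve_left ha

theorem isSaturated_span_image_basis {ι : Type*} (b : Basis ι R M) (J : Set ι) :
    (span R (b '' J)).IsSaturated := by
  intro a x ha hx
  rw [b.mem_span_image, map_smul, Finsupp.support_smul_eq ha] at hx
  exact b.mem_span_image.2 hx

theorem isSaturated_span_of_subset_range_basis {ι : Type*} (b : Basis ι R M) {s : Set M}
    (hs : s ⊆ Set.range b) : (span R s).IsSaturated := by
  rw [← Set.image_preimage_eq_of_subset hs]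
  exact isSaturated_span_image_basis b _

end IsDomain

section PID

variable [IsDomain R] [IsPrincipalIdealRing R]

theorem IsSaturated.exists_linearEquiv_prod [Module.Finite R M] {P : Submodule R M}
    (hP : P.IsSaturated) :
    ∃ e : M ≃ₗ[R] P × (M ⧸ P), P.subtype = e.symm.toLinearMap ∘ₗ inl R P (M ⧸ P) := by
  have := hP.isTorsionFree_quotient
  obtain ⟨s, hs⟩ := P.mkQ.exists_rightInverse_of_surjective P.range_mkQ
  have hsplit := ((LinearMap.exact_subtype_mkQ P).split_tfae P.injective_subtype
    P.mkQ_surjective).out 0 2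
  obtain ⟨e, he, -⟩ := hsplit.1 ⟨s, hs⟩
  exact ⟨e, he⟩

theorem IsSaturated.dualMap_subtype_surjective [Module.Finite R M] {P : Submodule R M}
    (hP : P.IsSaturated) : Function.Surjective P.subtype.dualMap := by
  obtain ⟨e, he⟩ := hP.exists_linearEquiv_prod
  refine fun φ => ⟨φ ∘ₗ LinearMap.fst R P (M ⧸ P) ∘ₗ e.toLinearMap, LinearMap.ext fun x => ?_⟩
  simp [he]

theorem IsSaturated.exists_basis_of_linearIndependent [Module.Finite R M] {ι : Type*} [Finite ι]
    {x : ι → M} (hsat : (span R (Set.range x)).IsSaturated) (hx : LinearIndependent R x) :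
    ∃ (n : ℕ) (b : Basis (Fin n) R M), ∀ i, x i ∈ Set.range b := by
  obtain ⟨e, he⟩ := hsat.exists_linearEquiv_prod
  have := hsat.isTorsionFree_quotient
  let b := ((Basis.span hx).prod (Free.chooseBasis R (M ⧸ span R (Set.range x)))).map e.symm
  have : Fintype (ι ⊕ Free.ChooseBasisIndex R (M ⧸ span R (Set.range x))) := Fintype.ofFinite _
  refine ⟨_, b.reindex (Fintype.equivFin _), fun i => ⟨Fintype.equivFin _ (.inl i), ?_⟩⟩
  simpa [b] using (LinearMap.congr_fun he ⟨x i, subset_span ⟨i, rfl⟩⟩).symm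

theorem exists_basis_iff_isSaturated_span [Module.Finite R M] {ι : Type*} {x : ι → M}
    {S : Set ι} [Finite S] (hS : LinearIndepOn R x S) :
    (∃ (n : ℕ) (b : Basis (Fin n) R M), ∀ i ∈ S, x i ∈ Set.range b) ↔
      (span R (x '' S)).IsSaturated := by
  refine ⟨fun ⟨n, b, hb⟩ => isSaturated_span_of_subset_range_basis b (Set.image_subset_iff.2 hb),
    fun h => ?_⟩
  rw [Set.image_eq_range] at h
  obtain ⟨n, b, hb⟩ := h.exists_basis_of_linearIndependent hS
  exact ⟨n, b, fun i hi => hb ⟨i, hi⟩⟩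

theorem forall_linearIndepOn_exists_basis_iff [Module.Finite R M] {ι : Type*} [Finite ι]
    (x : ι → M) :
    (∀ S : Set ι, LinearIndepOn R x S →
        ∃ (n : ℕ) (b : Basis (Fin n) R M), ∀ i ∈ S, x i ∈ Set.range b) ↔
      ∀ T : Set ι, (span R (x '' T)).IsSaturated := by
  rw [← forall_isSaturated_span_image_iff]
  exact forall_congr' fun S => forall_congr' fun hS => exists_basis_iff_isSaturated_span hS

theorem IsSaturated.range_dualMap_eq [Module.Finite R N] {g : M →ₗ[R] N}
    (hg : (range g).IsSaturated) : range g.dualMap = (ker g).dualAnnihilator :=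
  range_dualMap_eq_dualAnnihilator_ker_of_subtype_range_surjective g hg.dualMap_subtype_surjective

theorem isSaturated_range_dualMap_iff [Module.Finite R M] [Module.Free R M] [Module.Finite R N]
    [Module.Free R N] (g : M →ₗ[R] N) :
    (range g.dualMap).IsSaturated ↔ (range g).IsSaturated := by
  refine ⟨fun h => ?_, fun h => h.range_dualMap_eq ▸ isSaturated_dualAnnihilator _⟩
  have hdd : (range g.dualMap.dualMap).IsSaturated :=
    h.range_dualMap_eq ▸ isSaturated_dualAnnihilator _
  have hrange : range g.dualMap.dualMap = (range g).map (evalEquiv R N).toLinearMap := by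
    rw [← Dual.eval_comp_comp_evalEquiv_eq, range_comp,
      range_comp_of_range_eq_top _ (range_eq_top.2 (evalEquiv R M).symm.surjective),
      evalEquiv_toLinearMap]
  rwa [hrange, isSaturated_map_equiv_iff] at hdd

theorem isSaturated_map_iff_isSaturated_map_dualAnnihilator [Module.Finite R M] [Module.Free R M]
    [Module.Finite R N] [Module.Free R N] (g : M →ₗ[R] N) {K : Submodule R M}
    (hK : K.IsSaturated) :
    (K.map g).IsSaturated ↔ (K.dualAnnihilator.map (range g.dualMap).mkQ).IsSaturated := by
  have hmap : K.map g = range (g ∘ₗ K.subtype) := by rw [range_comp, range_subtype]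
  have hdual : range (g ∘ₗ K.subtype).dualMap = (range g.dualMap).map K.subtype.dualMap := by
    rw [← dualMap_comp_dualMap, range_comp]
  rw [hmap, ← isSaturated_range_dualMap_iff, hdual,
    isSaturated_map_iff_of_surjective hK.dualMap_subtype_surjective,
    ker_dualMap_eq_dualAnnihilator_range, range_subtype,
    isSaturated_map_iff_of_surjective (mkQ_surjective _), ker_mkQ, sup_comm]

end PID

end Submodule

theorem Module.Basis.dualAnnihilator_span_image {R M ι : Type*} [CommRing R] [AddCommGroup M]
    [Module R M] [Finite ι] (b : Basis ι R M) (T : Set ι) :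
    (span R (b '' T)).dualAnnihilator = span R (b.coord '' Tᶜ) := by
  have := Fintype.ofFinite ι
  refine le_antisymm (fun φ hφ => ?_) (span_le.2 ?_)
  · rw [mem_dualAnnihilator] at hφ
    rw [← b.sum_dual_apply_smul_coord φ]
    refine sum_mem fun i _ => ?_
    by_cases hi : i ∈ T
    · rw [hφ _ (subset_span ⟨i, hi, rfl⟩), zero_smul]
      exact zero_mem _
    · exact smul_mem _ _ (subset_span ⟨i, hi, rfl⟩)
  · rintro _ ⟨j, hj, rfl⟩
    rw [SetLike.mem_coe, mem_dualAnnihilator]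
    intro x hx
    rw [b.coord_apply, ← Finsupp.notMem_support_iff]
    exact fun h => hj (b.mem_span_image.1 hx h)

theorem stmt5_general (r d : ℕ)
    (ν : (Fin r → ℤ) →ₗ[ℤ] (Fin d → ℤ))
    (w : Fin r → (Module.Dual ℤ (Fin r → ℤ) ⧸ LinearMap.range ν.dualMap))
    (hw : ∀ i, w i = Submodule.Quotient.mk
      (LinearMap.proj i : (Fin r → ℤ) →ₗ[ℤ] ℤ)) :
    (∀ S : Set (Fin r),
        LinearIndependent ℤ (fun i : S => ν (Pi.single (i : Fin r) 1)) →
        ∃ (n : ℕ) (b : Module.Basis (Fin n) ℤ (Fin d → ℤ)),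
          ∀ i ∈ S, ν (Pi.single i 1) ∈ Set.range b) ↔
      (∀ S : Set (Fin r),
        LinearIndependent ℤ (fun i : S => w i) →
        ∃ (n : ℕ) (b : Module.Basis (Fin n) ℤ
            (Module.Dual ℤ (Fin r → ℤ) ⧸ LinearMap.range ν.dualMap)),
          ∀ i ∈ S, w i ∈ Set.range b) := by
  let e := Pi.basisFun ℤ (Fin r)
  have hw' : w = (range ν.dualMap).mkQ ∘ e.coord := funext fun i => (hw i).trans rfl
  have key (T : Set (Fin r)) : (span ℤ ((fun i => ν (Pi.single i 1)) '' T)).IsSaturated ↔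
      (span ℤ (w '' Tᶜ)).IsSaturated := by
    have := isSaturated_map_iff_isSaturated_map_dualAnnihilator ν (isSaturated_span_image_basis e T)
    rw [Submodule.map_span, e.dualAnnihilator_span_image, Submodule.map_span, ← Set.image_comp,
      ← Set.image_comp, ← hw'] at this
    simpa [e] using this
  exact (forall_linearIndepOn_exists_basis_iff fun i => ν (Pi.single i 1)).trans <|
    (forall_congr' key).trans <|
      (compl_surjective.forall (p := fun T => (span ℤ (w '' T)).IsSaturated)).symm.trans
        (forall_linearIndepOn_exists_basis_iff w).symm

/-- For a surjection `ν : ℤ^r → ℤ^d` with `A = (ℤ^r)^* / ν*((ℤ^d)^*)`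
and `wᵢ = α(eᵢ*)`, every linearly independent subfamily of `{ν(eᵢ)}` extends to a
ℤ-basis of `ℤ^d` iff every linearly independent subfamily of `{wᵢ}` extends to a
ℤ-basis of `A`. -/
theorem stmt5 (r d : ℕ)
    (ν : (Fin r → ℤ) →ₗ[ℤ] (Fin d → ℤ)) (hν : Function.Surjective ν)
    (w : Fin r → (Module.Dual ℤ (Fin r → ℤ) ⧸ LinearMap.range ν.dualMap))
    (hw : ∀ i, w i = Submodule.Quotient.mk
      (LinearMap.proj i : (Fin r → ℤ) →ₗ[ℤ] ℤ)) :
    (∀ S : Set (Fin r),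
        LinearIndependent ℤ (fun i : S => ν (Pi.single (i : Fin r) 1)) →
        ∃ (n : ℕ) (b : Module.Basis (Fin n) ℤ (Fin d → ℤ)),
          ∀ i ∈ S, ν (Pi.single i 1) ∈ Set.range b) ↔
      (∀ S : Set (Fin r),
        LinearIndependent ℤ (fun i : S => w i) →
        ∃ (n : ℕ) (b : Module.Basis (Fin n) ℤ
            (Module.Dual ℤ (Fin r → ℤ) ⧸ LinearMap.range ν.dualMap)),
          ∀ i ∈ S, w i ∈ Set.range b) :=
  stmt5_general r d ν w hw
end

section
/- Let ν: ℤ^r → ℤ^d be a surjective homomorphism, let ν*: Hom(ℤ^d, ℤ) → Hom(ℤ^r, ℤ) be its dual, and let A = Hom(ℤ^r, ℤ) / ν*(Hom(ℤ^d, ℤ)) with quotient map α. For a subset S ⊆ {1, …, r}, let ℤ^S = Σ_{i∈S} ℤ e_i ⊆ ℤ^r and let W_S = {φ ∈ Hom(ℤ^r, ℤ) : φ(e_i) = 0 for all i ∈ S}. Then the quotient ℤ^d / ν(ℤ^S) is torsion-free if and only if the quotient A / α(W_S) is torsion-free. -/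
open Module Submodule LinearMap

/-- Transfer `NoZeroSMulDivisors` along a linear equivalence. -/
private lemma nzsd_equiv {R M N : Type*} [CommRing R] [AddCommGroup M] [AddCommGroup N]
    [Module R M] [Module R N] (e : M ≃ₗ[R] N) (h : NoZeroSMulDivisors R M) :
    NoZeroSMulDivisors R N := by
  constructor
  intro c x hcx
  have hsm : c • e.symm x = 0 := by
    rw [← e.symm.map_smul, hcx, map_zero]
  rcases h.eq_zero_or_eq_zero_of_smul_eq_zero hsm with h1 | h2
  · exact Or.inl h1
  · exact Or.inr (by simpa using congrArg e h2)

/-- If the cokernel of `g` is torsion-free, so is the cokernel of its dual. -/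
private lemma lemA {R M N : Type*} [CommRing R] [IsDomain R] [IsPrincipalIdealRing R]
    [AddCommGroup M] [AddCommGroup N]
    [Module R M] [Module R N] [Module.Finite R N]
    (g : M →ₗ[R] N)
    (h : NoZeroSMulDivisors R (N ⧸ LinearMap.range g)) :
    NoZeroSMulDivisors R (Module.Dual R M ⧸ LinearMap.range g.dualMap) := by
  haveI := h
  haveI : Module.Free R (N ⧸ LinearMap.range g) := Module.free_of_finite_type_torsion_free'
  obtain ⟨s, hs⟩ := Module.projective_lifting_property (LinearMap.range g).mkQ
    (LinearMap.id) (LinearMap.range g).mkQ_surjective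
  have key : ∀ (c : R) (φ : Module.Dual R M), c ≠ 0 →
      c • φ ∈ LinearMap.range g.dualMap → φ ∈ LinearMap.range g.dualMap := by
    rintro c φ hc ⟨ψ, hψ⟩
    have hker : LinearMap.ker g ≤ LinearMap.ker φ := by
      intro x hx
      have h1 := LinearMap.congr_fun hψ x
      rw [LinearMap.dualMap_apply, LinearMap.mem_ker.mp hx, map_zero] at h1
      have h2 : c * φ x = 0 := by
        rw [← smul_eq_mul, ← LinearMap.smul_apply, ← h1]
      exact LinearMap.mem_ker.mpr ((mul_eq_zero.mp h2).resolve_left hc)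
    set χ0 : (M ⧸ LinearMap.ker g) →ₗ[R] R := (LinearMap.ker g).liftQ φ hker with hχ0
    set P : N →ₗ[R] N := LinearMap.id - s ∘ₗ (LinearMap.range g).mkQ with hPdef
    have hP : ∀ y, P y ∈ LinearMap.range g := by
      intro y
      have hsy := LinearMap.congr_fun hs ((LinearMap.range g).mkQ y)
      simp only [LinearMap.comp_apply, LinearMap.id_apply] at hsy
      have hz : (LinearMap.range g).mkQ (P y) = 0 := by
        have he : (LinearMap.range g).mkQ (P y)
            = (LinearMap.range g).mkQ y
              - (LinearMap.range g).mkQ (s ((LinearMap.range g).mkQ y)) := by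
          simp [hPdef]
        rw [he, hsy, sub_self]
      rwa [← LinearMap.mem_ker, Submodule.ker_mkQ] at hz
    set χ : ↥(LinearMap.range g) →ₗ[R] R :=
      χ0 ∘ₗ (g.quotKerEquivRange).symm.toLinearMap with hχ
    refine ⟨χ ∘ₗ (LinearMap.codRestrict (LinearMap.range g) P hP), ?_⟩
    ext x
    have hPx : P (g x) = g x := by
      have : (LinearMap.range g).mkQ (g x) = 0 := by
        rw [Submodule.mkQ_apply, Submodule.Quotient.mk_eq_zero]
        exact LinearMap.mem_range_self g x
      simp [hPdef, LinearMap.sub_apply, LinearMap.comp_apply, this]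
    have hmem : g x ∈ LinearMap.range g := LinearMap.mem_range_self g x
    have hcod : (LinearMap.codRestrict (LinearMap.range g) P hP) (g x)
        = ⟨g x, hmem⟩ := by
      apply Subtype.ext
      simpa using hPx
    have hsymm : (g.quotKerEquivRange).symm ⟨g x, hmem⟩
        = Submodule.Quotient.mk x := by
      rw [LinearEquiv.symm_apply_eq]
      apply Subtype.ext
      exact g.quotKerEquivRange_apply_mk x
    calc (g.dualMap (χ ∘ₗ (LinearMap.codRestrict (LinearMap.range g) P hP))) x
        = χ ((LinearMap.codRestrict (LinearMap.range g) P hP) (g x)) := rfl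
      _ = χ ⟨g x, hmem⟩ := by rw [hcod]
      _ = χ0 (Submodule.Quotient.mk x) := by rw [hχ, LinearMap.comp_apply,
            LinearEquiv.coe_toLinearMap, hsymm]
      _ = φ x := Submodule.liftQ_apply _ _ x
  constructor
  intro c x hcx
  by_cases hc : c = 0
  · exact Or.inl hc
  right
  obtain ⟨φ, rfl⟩ := Submodule.Quotient.mk_surjective _ x
  rw [← Submodule.Quotient.mk_smul, Submodule.Quotient.mk_eq_zero] at hcx
  rw [Submodule.Quotient.mk_eq_zero]
  exact key c φ hc hcx

private lemma lemB {R M N : Type*} [CommRing R] [IsDomain R] [IsPrincipalIdealRing R]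
    [AddCommGroup M] [AddCommGroup N]
    [Module R M] [Module R N] [Module.Finite R M] [Module.Finite R N]
    [Module.Free R M] [Module.Free R N] (g : M →ₗ[R] N)
    (h : NoZeroSMulDivisors R (Module.Dual R M ⧸ LinearMap.range g.dualMap)) :
    NoZeroSMulDivisors R (N ⧸ LinearMap.range g) := by
  have h2 := lemA g.dualMap h
  have hcomp : (Module.evalEquiv R N).toLinearMap ∘ₗ g
      = g.dualMap.dualMap ∘ₗ Module.Dual.eval R M := by
    rw [Module.evalEquiv_toLinearMap]
    exact (Module.Dual.eval_naturality g).symm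
  have hmap : (LinearMap.range g).map ((Module.evalEquiv R N) : N →ₗ[R] _)
      = LinearMap.range g.dualMap.dualMap := by
    rw [← LinearMap.range_comp, hcomp, LinearMap.range_comp,
      LinearMap.range_eq_top.mpr (Module.bijective_dual_eval R M).2, Submodule.map_top]
  exact nzsd_equiv
    (Submodule.Quotient.equiv _ _ (Module.evalEquiv R N) hmap).symm h2

/-- For a surjection `ν : ℤ^r → ℤ^d`, `A = (ℤ^r)^* / ν*((ℤ^d)^*)` with
quotient map `α`, `ℤ^S` the span of the `eᵢ`, `i ∈ S`, and
`W_S = {φ : φ(eᵢ) = 0 ∀ i ∈ S}`, the quotient `ℤ^d / ν(ℤ^S)` is torsion-free iff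
`A / α(W_S)` is torsion-free. -/
theorem stmt6 (r d : ℕ)
    (ν : (Fin r → ℤ) →ₗ[ℤ] (Fin d → ℤ)) (hν : Function.Surjective ν)
    (S : Set (Fin r))
    (ZS : Submodule ℤ (Fin r → ℤ))
    (hZS : ZS = Submodule.span ℤ ((fun i => Pi.single i (1 : ℤ)) '' S))
    (WS : Submodule ℤ (Module.Dual ℤ (Fin r → ℤ)))
    (hWS : ∀ φ : Module.Dual ℤ (Fin r → ℤ),
      φ ∈ WS ↔ ∀ i ∈ S, φ (Pi.single i 1) = 0) :
    NoZeroSMulDivisors ℤ ((Fin d → ℤ) ⧸ Submodule.map ν ZS) ↔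
      NoZeroSMulDivisors ℤ
        ((Module.Dual ℤ (Fin r → ℤ) ⧸ LinearMap.range ν.dualMap) ⧸
          Submodule.map (LinearMap.range ν.dualMap).mkQ WS) := by
  classical
  -- generators of ZS
  have hgen : ∀ i ∈ S, Pi.single i (1 : ℤ) ∈ ZS := by
    intro i hi
    rw [hZS]
    exact Submodule.subset_span ⟨i, hi, rfl⟩
  have hvanish : ∀ i, i ∉ S → ∀ x ∈ ZS, x i = 0 := by
    intro i hiS x hx
    have hle : ZS ≤ LinearMap.ker (LinearMap.proj i : (Fin r → ℤ) →ₗ[ℤ] ℤ) := by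
      rw [hZS, Submodule.span_le]
      rintro _ ⟨j, hj, rfl⟩
      simp only [SetLike.mem_coe, LinearMap.mem_ker, LinearMap.proj_apply]
      exact Pi.single_eq_of_ne (by rintro rfl; exact hiS hj) 1
    exact LinearMap.mem_ker.mp (hle hx)
  -- the projection onto ZS
  set mask : (Fin r → ℤ) →ₗ[ℤ] (Fin r → ℤ) :=
    LinearMap.pi (fun i => if i ∈ S then LinearMap.proj i else 0) with hmaskdef
  have hmask_apply : ∀ x j, mask x j = if j ∈ S then x j else 0 := by
    intro x j
    by_cases hj : j ∈ S <;> simp [hmaskdef, LinearMap.pi_apply, hj]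
  have hmask_mem : ∀ x, mask x ∈ ZS := by
    intro x
    have hx : mask x = ∑ i : Fin r, (if i ∈ S then x i else 0) • Pi.single i (1 : ℤ) := by
      funext j
      rw [Finset.sum_apply, Finset.sum_eq_single j]
      · by_cases hj : j ∈ S <;> simp [hmask_apply, hj]
      · intro b _ hbj
        simp [Pi.single_eq_of_ne (Ne.symm hbj)]
      · intro h; exact absurd (Finset.mem_univ j) h
    rw [hx]
    apply Submodule.sum_mem
    intro i _
    by_cases hi : i ∈ S
    · simp only [hi, if_true]
      exact Submodule.smul_mem _ _ (hgen i hi)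
    · simp [hi]
  have hmask_fix : ∀ x ∈ ZS, mask x = x := by
    intro x hx
    funext j
    by_cases hj : j ∈ S
    · simp [hmask_apply, hj]
    · simp [hmask_apply, hj, hvanish j hj x hx]
  set π : (Fin r → ℤ) →ₗ[ℤ] ↥ZS := LinearMap.codRestrict ZS mask hmask_mem with hπdef
  set g : ↥ZS →ₗ[ℤ] (Fin d → ℤ) := ν ∘ₗ ZS.subtype with hgdef
  have hrange : LinearMap.range g = Submodule.map ν ZS := by
    rw [hgdef, LinearMap.range_comp, Submodule.range_subtype]
  -- instances on ZS
  haveI hZSfin : Module.Finite ℤ ↥ZS := Module.Finite.iff_fg.mpr (IsNoetherian.noetherian ZS)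
  haveI hZSnzsd : NoZeroSMulDivisors ℤ ↥ZS := by
    constructor
    intro c x hcx
    have : c • (x : Fin r → ℤ) = 0 := by
      have := congrArg (Subtype.val) hcx
      simpa using this
    rcases smul_eq_zero.mp this with h1 | h2
    · exact Or.inl h1
    · exact Or.inr (Subtype.ext h2)
  haveI hZSfree : Module.Free ℤ ↥ZS := Module.free_of_finite_type_torsion_free'
  -- surjectivity of restriction of duals
  have hres_surj : Function.Surjective (ZS.subtype.dualMap) := by
    intro lam
    refine ⟨lam ∘ₗ π, ?_⟩
    ext x
    have hfix : π (ZS.subtype x) = x := Subtype.ext (hmask_fix x.1 x.2)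
    simp only [LinearMap.dualMap_apply, LinearMap.comp_apply]
    rw [hfix]
  set F : Module.Dual ℤ (Fin r → ℤ) →ₗ[ℤ] (Module.Dual ℤ ↥ZS ⧸ LinearMap.range g.dualMap) :=
    (LinearMap.range g.dualMap).mkQ ∘ₗ ZS.subtype.dualMap with hFdef
  have hFsurj : Function.Surjective F :=
    ((LinearMap.range g.dualMap).mkQ_surjective).comp hres_surj
  have hkerF : LinearMap.ker F = LinearMap.range ν.dualMap ⊔ WS := by
    ext φ
    have hmem : φ ∈ LinearMap.ker F ↔ ZS.subtype.dualMap φ ∈ LinearMap.range g.dualMap := by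
      rw [LinearMap.mem_ker, hFdef, LinearMap.comp_apply, ← LinearMap.mem_ker,
        Submodule.ker_mkQ]
    rw [hmem]
    constructor
    · rintro ⟨ψ, hψ⟩
      rw [Submodule.mem_sup]
      refine ⟨ν.dualMap ψ, ⟨ψ, rfl⟩, φ - ν.dualMap ψ, ?_, by abel⟩
      rw [hWS]
      intro i hi
      have hx := LinearMap.congr_fun hψ (⟨Pi.single i 1, hgen i hi⟩ : ZS)
      simp only [LinearMap.dualMap_apply, hgdef, LinearMap.comp_apply,
        Submodule.coe_subtype] at hx
      simp only [LinearMap.sub_apply, LinearMap.dualMap_apply]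
      rw [← hx]
      exact sub_eq_zero.mpr rfl
    · intro hφ
      rw [Submodule.mem_sup] at hφ
      obtain ⟨a, ⟨ψ, rfl⟩, w, hw, rfl⟩ := hφ
      have hZSker : ZS ≤ LinearMap.ker w := by
        rw [hZS, Submodule.span_le]
        rintro _ ⟨i, hi, rfl⟩
        exact LinearMap.mem_ker.mpr ((hWS w).mp hw i hi)
      refine ⟨ψ, ?_⟩
      ext x
      have hw0 : w x.1 = 0 := LinearMap.mem_ker.mp (hZSker x.2)
      simp only [LinearMap.dualMap_apply, hgdef, LinearMap.comp_apply,
        Submodule.coe_subtype, LinearMap.add_apply]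
      rw [hw0, add_zero]
  -- the equivalences
  have Eleft : ((Fin d → ℤ) ⧸ Submodule.map ν ZS) ≃ₗ[ℤ] ((Fin d → ℤ) ⧸ LinearMap.range g) :=
    Submodule.quotEquivOfEq _ _ hrange.symm
  have E0 : ((Module.Dual ℤ (Fin r → ℤ) ⧸ LinearMap.range ν.dualMap) ⧸
        Submodule.map (LinearMap.range ν.dualMap).mkQ WS) ≃ₗ[ℤ]
      (Module.Dual ℤ (Fin r → ℤ) ⧸ (LinearMap.range ν.dualMap ⊔ WS)) :=
    Submodule.quotientQuotientEquivQuotientSup (LinearMap.range ν.dualMap) WS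
  have E2 : (Module.Dual ℤ (Fin r → ℤ) ⧸ (LinearMap.range ν.dualMap ⊔ WS)) ≃ₗ[ℤ]
      (Module.Dual ℤ ↥ZS ⧸ LinearMap.range g.dualMap) :=
    (Submodule.quotEquivOfEq _ _ hkerF.symm).trans (F.quotKerEquivOfSurjective hFsurj)
  have Etot := E0.trans E2
  constructor
  · intro h1
    exact nzsd_equiv Etot.symm (lemA g (nzsd_equiv Eleft h1))
  · intro h2
    exact nzsd_equiv Eleft.symm (lemB g (nzsd_equiv Etot h2))
end

section
/- Let σ ⊆ ℝ^d be a salient convex cone that is the set of nonnegative real combinations of finitely many vectors of ℤ^d, and let w ∈ σ ∩ ℤ^d be nonzero. Then for every u ∈ Hom(ℤ^d, ℤ) with u(w) ≥ 0, there exists u' ∈ Hom(ℤ^d, ℤ) with u'(w) ≥ 0 such that (u + u')(x) ≥ 0 for all x ∈ σ. -/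
/-!
In a salient cone a sum of elements vanishes only if every summand does, so `0` is not in the
convex hull of finitely many nonzero points of `σ`; Hahn–Banach then gives a real functional that
is positive on the nonzero generators and on `w`. Rounding a large multiple of it keeps these
finitely many values positive and yields an integral functional `ℓ`. Then `u' = u(w) • ℓ - u`
works: `u + u' = u(w) • ℓ` is nonnegative on `σ`, and `u'(w) = u(w) (ℓ(w) - 1) ≥ 0`.
-/

open Set Filter

namespace PointedCone

variable {R E ι : Type*}

section OrderedSemiring

variable [Semiring R] [PartialOrder R] [IsOrderedRing R]

section AddCommMonoid

variable [AddCommMonoid E] [Module R E]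

lemma coe_hull_range [Fintype ι] (g : ι → E) :
    (hull R (range g) : Set E) = {x | ∃ c : ι → R, (∀ i, 0 ≤ c i) ∧ x = ∑ i, c i • g i} := by
  ext x
  simp only [SetLike.mem_coe, Submodule.mem_span_range_iff_exists_fun, mem_ofPred_eq]
  constructor
  · rintro ⟨c, rfl⟩
    exact ⟨fun i => c i, fun i => (c i).2, rfl⟩
  · rintro ⟨c, hc, rfl⟩
    exact ⟨fun i => ⟨c i, hc i⟩, rfl⟩

lemma nonneg_of_mem_hull {s : Set E} (f : E →ₗ[R] R) (hf : ∀ x ∈ s, 0 ≤ f x) {x : E}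
    (hx : x ∈ hull R s) : 0 ≤ f x := by
  induction hx using Submodule.span_induction with
  | mem x hx => exact hf x hx
  | zero => simp
  | add x y _ _ hx hy => simpa using add_nonneg hx hy
  | smul c x _ hx =>
    show 0 ≤ f ((c : R) • x)
    exact (map_smul f (c : R) x).symm ▸ mul_nonneg c.2 hx

end AddCommMonoid

lemma eq_zero_of_sum_eq_zero_of_salient [AddCommGroup E] [Module R E] {C : PointedCone R E}
    (hC : (C : ConvexCone R E).Salient)
    {s : Finset ι} {e : ι → E} (he : ∀ i ∈ s, e i ∈ C) (hs : ∑ i ∈ s, e i = 0) :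
    ∀ i ∈ s, e i = 0 := by
  classical
  intro i hi
  by_contra hne
  have hneg : -e i = ∑ j ∈ s.erase i, e j := by
    rw [neg_eq_iff_add_eq_zero, Finset.add_sum_erase s e hi, hs]
  exact hC (e i) (he i hi) hne (hneg ▸ C.sum_mem fun j hj => he j (Finset.mem_of_mem_erase hj))

end OrderedSemiring

section Real

variable [TopologicalSpace E] [AddCommGroup E] [Module ℝ E] [IsTopologicalAddGroup E]
  [ContinuousSMul ℝ E] [LocallyConvexSpace ℝ E] [T2Space E]

lemma exists_strongDual_pos_of_salient {C : PointedCone ℝ E} (hC : (C : ConvexCone ℝ E).Salient)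
    {S : Set E} (hS : S.Finite) (hSC : S ⊆ C) (h0 : (0 : E) ∉ S) :
    ∃ f : StrongDual ℝ E, ∀ x ∈ S, 0 < f x := by
  have h0K : (0 : E) ∉ convexHull ℝ S := by
    rw [mem_convexHull_iff_exists_fintype]
    rintro ⟨κ, _, t, z, ht0, ht1, hzS, hsum⟩
    have hz0 := eq_zero_of_sum_eq_zero_of_salient hC (s := Finset.univ) (e := fun k => t k • z k)
      (fun k _ => C.smul_mem (ht0 k) (hSC (hzS k))) hsum
    have ht : ∀ k, t k = 0 := fun k =>
      (smul_eq_zero.mp (hz0 k (Finset.mem_univ k))).resolve_right fun h => h0 (h ▸ hzS k)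
    simp [ht] at ht1
  obtain ⟨f, u, hfu, hf⟩ := geometric_hahn_banach_point_closed (convex_convexHull ℝ S)
    (hS.isClosed_convexHull ℝ) h0K
  exact ⟨f, fun x hx => (map_zero f ▸ hfu).trans (hf x (subset_convexHull ℝ S hx))⟩

end Real

end PointedCone

section Lattice

variable {κ : Type*} [Fintype κ]

lemma eventually_dotProduct_round_pos (a : κ → ℤ) {y : κ → ℝ} (h : 0 < y ⬝ᵥ (Int.cast ∘ a)) :
    ∀ᶠ n : ℕ in atTop, 0 < (fun j => round (n * y j)) ⬝ᵥ a := by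
  set B : ℝ := ∑ j, |(a j : ℝ)|
  filter_upwards [tendsto_natCast_atTop_atTop.eventually_gt_atTop (B / (y ⬝ᵥ (Int.cast ∘ a)))]
    with n hn
  have herr : |∑ j, ((round (n * y j) : ℝ) - n * y j) * a j| ≤ B / 2 := by
    calc |∑ j, ((round (n * y j) : ℝ) - n * y j) * a j|
        ≤ ∑ j, |(round (n * y j) : ℝ) - n * y j| * |(a j : ℝ)| := by
          simpa only [abs_mul] using
            Finset.abs_sum_le_sum_abs (fun j => ((round (n * y j) : ℝ) - n * y j) * a j) Finset.univ
      _ ≤ ∑ j, 1 / 2 * |(a j : ℝ)| := by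
          gcongr with j
          rw [abs_sub_comm]
          exact abs_sub_round _
      _ = B / 2 := by rw [← Finset.mul_sum]; ring
  have hsplit : (((fun j => round (n * y j)) ⬝ᵥ a : ℤ) : ℝ)
      = n * (y ⬝ᵥ (Int.cast ∘ a)) + ∑ j, ((round (n * y j) : ℝ) - n * y j) * a j := by
    simp only [dotProduct, Int.cast_sum, Int.cast_mul, Function.comp_apply, Finset.mul_sum,
      ← Finset.sum_add_distrib]
    exact Finset.sum_congr rfl fun j _ => by ring
  have hB : B < n * (y ⬝ᵥ (Int.cast ∘ a)) := (div_lt_iff₀ h).mp hn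
  have hB0 : 0 ≤ B := Finset.sum_nonneg fun j _ => abs_nonneg _
  have : (0 : ℝ) < ((fun j => round (n * y j)) ⬝ᵥ a : ℤ) := by
    rw [hsplit]
    linarith [(abs_le.mp herr).1]
  exact_mod_cast this

lemma exists_int_dotProduct_pos {T : Set (κ → ℤ)} (hT : T.Finite) {y : κ → ℝ}
    (hy : ∀ a ∈ T, 0 < y ⬝ᵥ (Int.cast ∘ a)) : ∃ ℓ : κ → ℤ, ∀ a ∈ T, 0 < ℓ ⬝ᵥ a :=
  let ⟨_, hn⟩ :=
    ((eventually_all_finite hT).mpr fun a ha => eventually_dotProduct_round_pos a (hy a ha)).exists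
  ⟨_, hn⟩

open PointedCone in
lemma exists_int_dotProduct_pos_of_salient [DecidableEq κ] {C : PointedCone ℝ (κ → ℝ)}
    (hC : (C : ConvexCone ℝ (κ → ℝ)).Salient) {T : Set (κ → ℤ)} (hT : T.Finite)
    (hTC : ∀ a ∈ T, (Int.cast ∘ a : κ → ℝ) ∈ C) (hT0 : 0 ∉ T) :
    ∃ ℓ : κ → ℤ, ∀ a ∈ T, 0 < ℓ ⬝ᵥ a := by
  have hcast0 : ∀ a : κ → ℤ, (Int.cast ∘ a : κ → ℝ) = 0 → a = 0 := fun a h =>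
    funext fun j => by simpa using congrFun h j
  obtain ⟨f, hf⟩ := exists_strongDual_pos_of_salient hC (hT.image (Int.cast ∘ ·))
    (image_subset_iff.mpr hTC)
    (fun ⟨a, ha, h0⟩ => hT0 (hcast0 a h0 ▸ ha))
  set y := (dotProductEquiv ℝ κ).symm f.toLinearMap
  have hfy : ∀ x, f x = y ⬝ᵥ x := fun x =>
    congrArg (· x) ((dotProductEquiv ℝ κ).apply_symm_apply f.toLinearMap).symm
  exact exists_int_dotProduct_pos hT fun a ha => hfy _ ▸ hf _ ⟨a, ha, rfl⟩

open PointedCone in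
lemma exists_int_dotProduct_nonneg_on_hull {ι : Type*} [Finite ι] [DecidableEq κ]
    (v : ι → κ → ℤ)
    (hC : (hull ℝ (range fun i => (Int.cast ∘ v i : κ → ℝ)) : ConvexCone ℝ (κ → ℝ)).Salient)
    {w : κ → ℤ} (hwC : (Int.cast ∘ w : κ → ℝ) ∈ hull ℝ (range fun i => (Int.cast ∘ v i : κ → ℝ)))
    (hw : w ≠ 0) :
    ∃ ℓ : κ → ℤ, 0 < ℓ ⬝ᵥ w ∧ ∀ x ∈ hull ℝ (range fun i => (Int.cast ∘ v i : κ → ℝ)),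
      0 ≤ (Int.cast ∘ ℓ : κ → ℝ) ⬝ᵥ x := by
  obtain ⟨ℓ, hℓ⟩ := exists_int_dotProduct_pos_of_salient hC (T := insert w (range v) \ {0})
    ((finite_range v).insert w).sdiff
    (by
      rintro _ ⟨rfl | ⟨i, rfl⟩, -⟩
      exacts [hwC, Submodule.subset_span ⟨i, rfl⟩])
    (fun h => h.2 rfl)
  refine ⟨ℓ, hℓ w ⟨mem_insert w _, hw⟩, fun x hx => ?_⟩
  refine nonneg_of_mem_hull (dotProductEquiv ℝ κ (Int.cast ∘ ℓ)) ?_ hx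
  rintro _ ⟨i, rfl⟩
  have : 0 ≤ ℓ ⬝ᵥ v i := by
    by_cases hvi : v i = 0
    · simp [hvi]
    · exact (hℓ (v i) ⟨mem_insert_of_mem w ⟨i, rfl⟩, hvi⟩).le
  show (0 : ℝ) ≤ (Int.castRingHom ℝ ∘ ℓ) ⬝ᵥ (Int.castRingHom ℝ ∘ v i)
  rw [← RingHom.map_dotProduct]
  exact Int.cast_nonneg_iff.mpr this

end Lattice

open PointedCone in
/-- For a salient cone `σ` generated by finitely many integer vectors
and a nonzero `w ∈ σ ∩ ℤ^d`, every integral linear functional `u` with `u(w) ≥ 0`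
admits `u'` with `u'(w) ≥ 0` such that `u + u'` is nonnegative on `σ`. -/
theorem stmt7 (d r : ℕ) (v : Fin r → Fin d → ℤ)
    (σ : Set (Fin d → ℝ))
    (hσ : σ = {x | ∃ c : Fin r → ℝ, (∀ i, 0 ≤ c i) ∧
      x = ∑ i, c i • (fun j => (v i j : ℝ))})
    (hsalient : ∀ x ∈ σ, -x ∈ σ → x = 0)
    (w : Fin d → ℤ) (hwσ : (fun j => (w j : ℝ)) ∈ σ) (hw : w ≠ 0)
    (u : (Fin d → ℤ) →ₗ[ℤ] ℤ) (hu : 0 ≤ u w) :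
    ∃ u' : (Fin d → ℤ) →ₗ[ℤ] ℤ, 0 ≤ u' w ∧
      ∀ x ∈ σ, 0 ≤ ∑ j, (((u + u') (Pi.single j 1) : ℤ) : ℝ) * x j := by
  have hσC : σ = hull ℝ (range fun i => (Int.cast ∘ v i : Fin d → ℝ)) := by
    rw [hσ, coe_hull_range]; rfl
  subst hσC
  obtain ⟨ℓ, hℓw, hℓσ⟩ := exists_int_dotProduct_nonneg_on_hull v
    (fun x hx hx0 hnx => hx0 (hsalient x hx hnx)) hwσ hw
  set L := dotProductEquiv ℤ (Fin d) ℓ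
  refine ⟨u w • L - u, ?_, fun x hx => ?_⟩
  · have hLw : 1 ≤ L w := hℓw
    simp only [LinearMap.sub_apply, LinearMap.smul_apply, smul_eq_mul]
    linarith [mul_le_mul_of_nonneg_left hLw hu]
  · have hsingle : ∀ j, (u + (u w • L - u)) (Pi.single j 1) = u w * ℓ j := fun j => by
      simp [L, dotProduct_single]
    calc (0 : ℝ) ≤ u w * ((Int.cast ∘ ℓ : Fin d → ℝ) ⬝ᵥ x) :=
          mul_nonneg (Int.cast_nonneg_iff.mpr hu) (hℓσ x hx)
      _ = _ := by
        simp only [hsingle, Int.cast_mul, dotProduct, Finset.mul_sum, Function.comp_apply,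
          mul_assoc]
end

section
/- Let R be a commutative ring, let m_1, …, m_r ∈ ℕ, and let n ∈ ℕ satisfy n ≥ 2m_i − 1 for all i ∈ {1, …, r}. Let t denote the class of X in the quotient ring R[X]/(X^{n+1}). Then the set H = {(g_1, …, g_r) ∈ ((R[X]/(X^{n+1}))ˣ)^r : g_i · t^{m_i} = t^{m_i} for all i} is a subgroup of the product of unit groups ((R[X]/(X^{n+1}))ˣ)^r, and H is isomorphic as a group to the additive group R^{m_1 + ⋯ + m_r}. -/
/-- The truncated polynomial ring `R[X]/(X^(n+1))`. -/
abbrev TruncRing (R : Type*) [CommRing R] (n : ℕ) : Type _ :=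
  Polynomial R ⧸ Ideal.span {(Polynomial.X : Polynomial R) ^ (n + 1)}

/-- The class `t` of `X` in `R[X]/(X^(n+1))`. -/
noncomputable def tvar (R : Type*) [CommRing R] (n : ℕ) : TruncRing R n :=
  Ideal.Quotient.mk (Ideal.span {(Polynomial.X : Polynomial R) ^ (n + 1)}) Polynomial.X

namespace Stmt10Aux

variable {R : Type*} [CommRing R] {n : ℕ}

/-- The quotient map `R[X] → R[X]/(X^(n+1))`. -/
noncomputable def mkI : Polynomial R →+* TruncRing R n :=
  Ideal.Quotient.mk (Ideal.span {(Polynomial.X : Polynomial R) ^ (n + 1)})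

theorem mkI_X : (mkI Polynomial.X : TruncRing R n) = tvar R n := rfl

theorem mkI_eq_zero_iff (p : Polynomial R) :
    (mkI p : TruncRing R n) = 0 ↔ (Polynomial.X : Polynomial R) ^ (n + 1) ∣ p := by
  rw [mkI, Ideal.Quotient.eq_zero_iff_mem, Ideal.mem_span_singleton]

theorem tvar_pow_eq_zero {j : ℕ} (hj : n + 1 ≤ j) : tvar R n ^ j = 0 := by
  have h : tvar R n ^ j = mkI (Polynomial.X ^ j) := (map_pow _ _ _).symm
  rw [h, mkI_eq_zero_iff]
  exact pow_dvd_pow _ hj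

/-- The element `∑ c_k t^(n+1-m+k)`. -/
noncomputable def aElt (m : ℕ) (c : Fin m → R) : TruncRing R n :=
  ∑ k, mkI (Polynomial.C (c k)) * tvar R n ^ (n + 1 - m + (k : ℕ))

theorem aElt_add (m : ℕ) (c c' : Fin m → R) :
    (aElt m (c + c') : TruncRing R n) = aElt m c + aElt m c' := by
  simp [aElt, Polynomial.C_add, add_mul, Finset.sum_add_distrib]

theorem aElt_sub (m : ℕ) (c c' : Fin m → R) :
    (aElt m (c - c') : TruncRing R n) = aElt m c - aElt m c' := by
  simp [aElt, Polynomial.C_sub, sub_mul, Finset.sum_sub_distrib]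

theorem aElt_mul_aElt {m : ℕ} (h2 : 2 * m - 1 ≤ n) (c c' : Fin m → R) :
    (aElt m c : TruncRing R n) * aElt m c' = 0 := by
  rw [aElt, aElt, Finset.sum_mul_sum]
  refine Finset.sum_eq_zero fun k _ => Finset.sum_eq_zero fun k' _ => ?_
  rw [mul_mul_mul_comm, ← pow_add, tvar_pow_eq_zero (by omega), mul_zero]

theorem aElt_mul_tpow (m : ℕ) (c : Fin m → R) :
    (aElt m c : TruncRing R n) * tvar R n ^ m = 0 := by
  rw [aElt, Finset.sum_mul]
  refine Finset.sum_eq_zero fun k _ => ?_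
  rw [mul_assoc, ← pow_add, tvar_pow_eq_zero (by omega), mul_zero]

theorem aElt_eq_zero {m : ℕ} (h2 : 2 * m - 1 ≤ n) {c : Fin m → R}
    (hc : (aElt m c : TruncRing R n) = 0) : c = 0 := by
  have hm : m ≤ n + 1 := by omega
  set q : Polynomial R :=
    ∑ k : Fin m, Polynomial.C (c k) * Polynomial.X ^ (n + 1 - m + (k : ℕ)) with hq
  have hmkq : (mkI q : TruncRing R n) = aElt m c := by
    rw [hq, map_sum, aElt]
    simp_rw [map_mul, map_pow, mkI_X]
  have hdvd : (Polynomial.X : Polynomial R) ^ (n + 1) ∣ q := by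
    rw [← mkI_eq_zero_iff, hmkq, hc]
  funext k
  have hk := Polynomial.X_pow_dvd_iff.mp hdvd (n + 1 - m + (k : ℕ)) (by omega)
  rw [hq, Polynomial.finset_sum_coeff] at hk
  simp_rw [Polynomial.coeff_C_mul, Polynomial.coeff_X_pow] at hk
  have hsum : ∑ k' : Fin m,
      c k' * (if (n + 1 - m + (k : ℕ)) = (n + 1 - m + (k' : ℕ)) then (1 : R) else 0) = c k := by
    rw [Finset.sum_eq_single k]
    · rw [if_pos rfl, mul_one]
    · intro b _ hb
      rw [if_neg, mul_zero]
      intro hcontra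
      exact hb (Fin.ext (by omega))
    · intro h
      exact absurd (Finset.mem_univ k) h
  rw [hsum] at hk
  exact hk

theorem mk_eq_sum (p : Polynomial R) :
    (mkI p : TruncRing R n) =
      ∑ j ∈ Finset.range (n + 1), mkI (Polynomial.C (p.coeff j)) * tvar R n ^ j := by
  have hmk : ∀ (j : ℕ) (a : R),
      (mkI (Polynomial.monomial j a) : TruncRing R n) = mkI (Polynomial.C a) * tvar R n ^ j := by
    intro j a
    rw [← Polynomial.C_mul_X_pow_eq_monomial, map_mul, map_pow, mkI_X]
  conv_lhs => rw [p.as_sum_range' (max (n + 1) (p.natDegree + 1))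
    (lt_of_lt_of_le (Nat.lt_succ_self _) (le_max_right _ _)), map_sum]
  simp_rw [hmk]
  refine (Finset.sum_subset (Finset.range_subset_range.mpr (le_max_left _ _)) ?_).symm
  intro j _ hj
  rw [tvar_pow_eq_zero (by simpa using hj), mul_zero]

theorem exists_aElt {m : ℕ} (h2 : 2 * m - 1 ≤ n) {x : TruncRing R n}
    (hx : x * tvar R n ^ m = 0) : ∃ c : Fin m → R, aElt m c = x := by
  have hm : m ≤ n + 1 := by omega
  obtain ⟨p, rfl⟩ := Ideal.Quotient.mk_surjective (I := Ideal.span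
    {(Polynomial.X : Polynomial R) ^ (n + 1)}) x
  have hdvd : (Polynomial.X : Polynomial R) ^ (n + 1) ∣ p * Polynomial.X ^ m := by
    rw [← mkI_eq_zero_iff, map_mul, map_pow, mkI_X]
    exact hx
  have hcoeff : ∀ j < n + 1 - m, p.coeff j = 0 := by
    intro j hj
    have h := Polynomial.X_pow_dvd_iff.mp hdvd (j + m) (by omega)
    rwa [Polynomial.coeff_mul_X_pow] at h
  refine ⟨fun k => p.coeff (n + 1 - m + k), ?_⟩
  show _ = (mkI p : TruncRing R n)
  rw [mk_eq_sum, aElt]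
  rw [Finset.range_eq_Ico,
    ← Finset.sum_Ico_consecutive _ (Nat.zero_le (n + 1 - m)) (by omega : n + 1 - m ≤ n + 1)]
  have h1 : ∑ j ∈ Finset.Ico 0 (n + 1 - m),
      (mkI (Polynomial.C (p.coeff j)) : TruncRing R n) * tvar R n ^ j = 0 :=
    Finset.sum_eq_zero fun j hj => by
      rw [hcoeff j (Finset.mem_Ico.mp hj).2, Polynomial.C_0, map_zero, zero_mul]
  have h2' : ∑ j ∈ Finset.Ico (n + 1 - m) (n + 1),
      (mkI (Polynomial.C (p.coeff j)) : TruncRing R n) * tvar R n ^ j =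
      ∑ k : Fin m, (mkI (Polynomial.C (p.coeff (n + 1 - m + (k : ℕ)))) : TruncRing R n) *
        tvar R n ^ (n + 1 - m + (k : ℕ)) := by
    rw [Finset.sum_Ico_eq_sum_range, (by omega : n + 1 - (n + 1 - m) = m),
      ← Fin.sum_univ_eq_sum_range]
  rw [h1, h2', zero_add]

/-- The unit `1 + aElt m c`. -/
noncomputable def uElt {m : ℕ} (h2 : 2 * m - 1 ≤ n) (c : Fin m → R) : (TruncRing R n)ˣ where
  val := 1 + aElt m c
  inv := 1 - aElt m c
  val_inv := by linear_combination -(aElt_mul_aElt h2 c c)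
  inv_val := by linear_combination -(aElt_mul_aElt h2 c c)

theorem uElt_val {m : ℕ} (h2 : 2 * m - 1 ≤ n) (c : Fin m → R) :
    ((uElt h2 c : (TruncRing R n)ˣ) : TruncRing R n) = 1 + aElt m c := rfl

end Stmt10Aux

open Stmt10Aux in
/-- If `n ≥ 2mᵢ - 1` for all `i`, then
`H = {(g₁, …, g_r) : gᵢ t^{mᵢ} = t^{mᵢ}}` is a subgroup of the product of unit
groups of `R[X]/(X^(n+1))`, isomorphic to the additive group `R^{m₁ + ⋯ + m_r}`. -/
theorem stmt10 (R : Type*) [CommRing R] (r : ℕ) (m : Fin r → ℕ) (n : ℕ)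
    (hn : ∀ i, 2 * m i - 1 ≤ n) :
    ∃ H : Subgroup (Fin r → (TruncRing R n)ˣ),
      (H : Set (Fin r → (TruncRing R n)ˣ)) =
        {g | ∀ i, ((g i : (TruncRing R n)ˣ) : TruncRing R n) * (tvar R n) ^ (m i)
          = (tvar R n) ^ (m i)} ∧
      Nonempty (H ≃* Multiplicative (Fin (∑ i, m i) → R)) := by
  let H : Subgroup (Fin r → (TruncRing R n)ˣ) :=
    { carrier := {g | ∀ i, ((g i : (TruncRing R n)ˣ) : TruncRing R n) * (tvar R n) ^ (m i)
          = (tvar R n) ^ (m i)}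
      one_mem' := fun i => by simp
      mul_mem' := fun {a b} ha hb i => by
        simp only [Pi.mul_apply, Units.val_mul, mul_assoc, hb i, ha i]
      inv_mem' := fun {g} hg i => by
        have h : (((g i)⁻¹ : (TruncRing R n)ˣ) : TruncRing R n) * (((g i : (TruncRing R n)ˣ) :
            TruncRing R n) * (tvar R n) ^ (m i)) = (tvar R n) ^ (m i) := by
          rw [← mul_assoc, ← Units.val_mul, inv_mul_cancel, Units.val_one, one_mul]
        rw [hg i] at h
        simpa using h }
  refine ⟨H, rfl, ?_⟩
  let φ : Multiplicative (∀ i, Fin (m i) → R) →* (Fin r → (TruncRing R n)ˣ) :=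
    { toFun := fun c i => uElt (hn i) (Multiplicative.toAdd c i)
      map_one' := by
        funext i
        apply Units.ext
        rw [uElt_val]
        show 1 + aElt (m i) 0 = ((1 : (TruncRing R n)ˣ) : TruncRing R n)
        simp [aElt]
      map_mul' := fun c c' => by
        funext i
        apply Units.ext
        simp only [Pi.mul_apply, Units.val_mul, uElt_val, toAdd_mul, Pi.add_apply, aElt_add]
        linear_combination -(aElt_mul_aElt (hn i) (Multiplicative.toAdd c i)
          (Multiplicative.toAdd c' i)) }
  have hmem : ∀ c, φ c ∈ H := by
    intro c i
    show ((uElt (hn i) (Multiplicative.toAdd c i) : (TruncRing R n)ˣ) : TruncRing R n) *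
      tvar R n ^ (m i) = tvar R n ^ (m i)
    rw [uElt_val, add_mul, one_mul, aElt_mul_tpow, add_zero]
  let ψ : Multiplicative (∀ i, Fin (m i) → R) →* H := φ.codRestrict H hmem
  have hinj : Function.Injective ψ := by
    intro c c' hcc
    have h : ∀ i, (1 : TruncRing R n) + aElt (m i) (Multiplicative.toAdd c i) =
        1 + aElt (m i) (Multiplicative.toAdd c' i) := fun i =>
      congrArg Units.val (congrFun (congrArg Subtype.val hcc) i)
    have h0 : Multiplicative.toAdd c = Multiplicative.toAdd c' := by
      funext i
      have h1 : aElt (m i) (Multiplicative.toAdd c i - Multiplicative.toAdd c' i)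
          = (0 : TruncRing R n) := by
        rw [aElt_sub]
        linear_combination h i
      have h2 := aElt_eq_zero (hn i) h1
      exact sub_eq_zero.mp h2
    exact Multiplicative.toAdd.injective h0
  have hsurj : Function.Surjective ψ := by
    rintro ⟨g, hg⟩
    have hg' : ∀ i, ((g i : (TruncRing R n)ˣ) : TruncRing R n) * (tvar R n) ^ (m i)
        = (tvar R n) ^ (m i) := hg
    have hx : ∀ i, (((g i : (TruncRing R n)ˣ) : TruncRing R n) - 1) * tvar R n ^ (m i) = 0 := by
      intro i
      rw [sub_mul, one_mul, hg' i, sub_self]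
    choose c hc using fun i => exists_aElt (hn i) (hx i)
    refine ⟨Multiplicative.ofAdd c, ?_⟩
    apply Subtype.ext
    funext i
    apply Units.ext
    show (1 : TruncRing R n) + aElt (m i) (c i) = ((g i : (TruncRing R n)ˣ) : TruncRing R n)
    rw [hc i]
    ring
  let e1 : Multiplicative (∀ i, Fin (m i) → R) ≃* H := MulEquiv.ofBijective ψ ⟨hinj, hsurj⟩
  let E : (Σ i : Fin r, Fin (m i)) ≃ Fin (∑ i, m i) := Fintype.equivFinOfCardEq (by simp)
  let A1 : (Fin (∑ i, m i) → R) ≃+ ((Σ i : Fin r, Fin (m i)) → R) :=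
    { Equiv.arrowCongr E.symm (Equiv.refl R) with map_add' := fun f g => rfl }
  let A2 : ((Σ i : Fin r, Fin (m i)) → R) ≃+ (∀ i, Fin (m i) → R) :=
    { Equiv.piCurry (fun _ _ => R) with map_add' := fun f g => rfl }
  exact ⟨e1.symm.trans (AddEquiv.toMultiplicative (A1.trans A2)).symm⟩
end

section
/- Let k be a field, let F be the free commutative monoid on generators f_1, …, f_r (so F ≅ ℕ^r), and let P ⊆ F be a submonoid. Let ψ_1, ψ_2: F → k[[t]] be homomorphisms of monoids into the multiplicative monoid of the formal power series ring k[[t]] such that (a) ψ_1(p) = ψ_2(p) for all p ∈ P, and (b) for every f ∈ F, the power series ψ_1(f) and ψ_2(f) are nonzero and have equal t-adic order. Then there exists a unique monoid homomorphism g: F → k[[t]]ˣ into the group of units of k[[t]] such that g(f)·ψ_1(f) = ψ_2(f) for all f ∈ F, and this g satisfies g(p) = 1 for all p ∈ P. -/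
/-!
Over a field every nonzero power series is `t ^ (order)` times a unit, so two nonzero series
of equal order differ by a unique unit factor `g f = ψ₂ f / ψ₁ f`. Because the `ψᵢ` are
multiplicative and `k[[t]]` is a domain, cancelling `ψ₁` shows that `f ↦ g f` is again
multiplicative, is the only solution, and is trivial wherever `ψ₁` and `ψ₂` agree.
-/

open PowerSeries

theorem PowerSeries.exists_unit_mul_eq_of_order_eq {k : Type*} [Field k] {a b : k⟦X⟧}
    (ha : a ≠ 0) (hab : a.order = b.order) : ∃ u : k⟦X⟧ˣ, u * a = b := by
  have factor {f : k⟦X⟧} (hf : f ≠ 0) : ∃ u : k⟦X⟧ˣ, X ^ f.order.toNat * (u : k⟦X⟧) = f :=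
    ⟨Unit_of_divided_by_X_pow_order f, by
      rw [Unit_of_divided_by_X_pow_order_nonzero hf, X_pow_order_mul_divXPowOrder]⟩
  have hb : b ≠ 0 := fun hb => ha (order_eq_top.mp (hab.trans (order_eq_top.mpr hb)))
  obtain ⟨ua, hua⟩ := factor ha
  obtain ⟨ub, hub⟩ := factor hb
  refine ⟨ub * ua⁻¹, ?_⟩
  rw [← hua, ← hub, hab, Units.val_mul]
  linear_combination (X ^ b.order.toNat * (ub : k⟦X⟧)) * ua.inv_mul

theorem Units.eq_of_mul_right_eq_mul {R : Type*} [MonoidWithZero R] [IsRightCancelMulZero R]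
    {a : R} (ha : a ≠ 0) {u v : Rˣ} (h : (u : R) * a = v * a) : u = v :=
  Units.ext (mul_right_cancel₀ ha h)

section UnitRatio

variable {M R : Type*} [CommMonoidWithZero R] [IsRightCancelMulZero R]
  {ψ₁ ψ₂ : M → R} {g : M → Rˣ}

theorem unitRatio_map_add [Add M] (hne : ∀ f, ψ₁ f ≠ 0)
    (hψ₁ : ∀ a b, ψ₁ (a + b) = ψ₁ a * ψ₁ b) (hψ₂ : ∀ a b, ψ₂ (a + b) = ψ₂ a * ψ₂ b)
    (hg : ∀ f, (g f : R) * ψ₁ f = ψ₂ f) (a b : M) : g (a + b) = g a * g b := by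
  refine Units.eq_of_mul_right_eq_mul (hne (a + b)) ?_
  rw [hg, hψ₂, hψ₁, Units.val_mul, mul_mul_mul_comm, hg, hg]

theorem unitRatio_unique (hne : ∀ f, ψ₁ f ≠ 0) (hg : ∀ f, (g f : R) * ψ₁ f = ψ₂ f)
    {g' : M → Rˣ} (hg' : ∀ f, (g' f : R) * ψ₁ f = ψ₂ f) : g' = g :=
  funext fun f => Units.eq_of_mul_right_eq_mul (hne f) (by rw [hg, hg'])

theorem unitRatio_eq_one (hne : ∀ f, ψ₁ f ≠ 0) (hg : ∀ f, (g f : R) * ψ₁ f = ψ₂ f)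
    {p : M} (hp : ψ₁ p = ψ₂ p) : g p = 1 :=
  Units.eq_of_mul_right_eq_mul (hne p) (by rw [hg, Units.val_one, one_mul, hp])

end UnitRatio

theorem stmt12_general (k : Type*) [Field k] (r : ℕ)
    (P : AddSubmonoid (Fin r → ℕ))
    (ψ₁ ψ₂ : (Fin r → ℕ) → PowerSeries k)
    (hψ₁add : ∀ a b, ψ₁ (a + b) = ψ₁ a * ψ₁ b)
    (hψ₂add : ∀ a b, ψ₂ (a + b) = ψ₂ a * ψ₂ b)
    (hagree : ∀ p ∈ P, ψ₁ p = ψ₂ p)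
    (hne : ∀ f, ψ₁ f ≠ 0 ∧ ψ₂ f ≠ 0)
    (horder : ∀ f, (ψ₁ f).order = (ψ₂ f).order) :
    (∃! g : (Fin r → ℕ) → (PowerSeries k)ˣ,
      (g 0 = 1 ∧ ∀ a b, g (a + b) = g a * g b) ∧
      ∀ f, (g f : PowerSeries k) * ψ₁ f = ψ₂ f) ∧
    (∀ g : (Fin r → ℕ) → (PowerSeries k)ˣ,
      ((g 0 = 1 ∧ ∀ a b, g (a + b) = g a * g b) ∧
        ∀ f, (g f : PowerSeries k) * ψ₁ f = ψ₂ f) →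
      ∀ p ∈ P, g p = 1) := by
  have hne₁ f := (hne f).1
  choose g hg using fun f => exists_unit_mul_eq_of_order_eq (hne₁ f) (horder f)
  have hg_add := unitRatio_map_add hne₁ hψ₁add hψ₂add hg
  have hg_zero : g 0 = 1 := by simpa using hg_add 0 0
  refine ⟨⟨g, ⟨⟨hg_zero, hg_add⟩, hg⟩, fun g' hg' => unitRatio_unique hne₁ hg hg'.2⟩, ?_⟩
  rintro g' ⟨-, hg'⟩ p hp
  exact unitRatio_eq_one hne₁ hg' (hagree p hp)

/-- Let `F = ℕ^r` be the free commutative monoid, `P ⊆ F` a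
submonoid, and `ψ₁, ψ₂ : F → k[[t]]` multiplicative-monoid-valued homomorphisms
agreeing on `P`, with all values nonzero of equal `t`-adic orders. Then there is a
unique monoid homomorphism `g : F → k[[t]]ˣ` with `g(f)·ψ₁(f) = ψ₂(f)` for all
`f`, and it satisfies `g(p) = 1` for `p ∈ P`. -/
theorem stmt12 (k : Type*) [Field k] (r : ℕ)
    (P : AddSubmonoid (Fin r → ℕ))
    (ψ₁ ψ₂ : (Fin r → ℕ) → PowerSeries k)
    (hψ₁0 : ψ₁ 0 = 1) (hψ₁add : ∀ a b, ψ₁ (a + b) = ψ₁ a * ψ₁ b)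
    (hψ₂0 : ψ₂ 0 = 1) (hψ₂add : ∀ a b, ψ₂ (a + b) = ψ₂ a * ψ₂ b)
    (hagree : ∀ p ∈ P, ψ₁ p = ψ₂ p)
    (hne : ∀ f, ψ₁ f ≠ 0 ∧ ψ₂ f ≠ 0)
    (horder : ∀ f, (ψ₁ f).order = (ψ₂ f).order) :
    (∃! g : (Fin r → ℕ) → (PowerSeries k)ˣ,
      (g 0 = 1 ∧ ∀ a b, g (a + b) = g a * g b) ∧
      ∀ f, (g f : PowerSeries k) * ψ₁ f = ψ₂ f) ∧
    (∀ g : (Fin r → ℕ) → (PowerSeries k)ˣ,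
      ((g 0 = 1 ∧ ∀ a b, g (a + b) = g a * g b) ∧
        ∀ f, (g f : PowerSeries k) * ψ₁ f = ψ₂ f) →
      ∀ p ∈ P, g p = 1) :=
  stmt12_general k r P ψ₁ ψ₂ hψ₁add hψ₂add hagree hne horder
end

section
/- Let k' be a field of characteristic 0. Let v_1, …, v_r ∈ ℤ^d be nonzero vectors whose set of nonnegative real combinations σ is a salient and full-dimensional convex cone in ℝ^d, and let ν: ℤ^r → ℤ^d be the homomorphism with ν(e_i) = v_i. Let P = {u ∈ Hom(ℤ^d, ℤ) : u(x) ≥ 0 for all x ∈ σ} and F = {φ ∈ Hom(ℤ^r, ℤ) : φ(e_i) ≥ 0 for all i}. Let w ∈ σ ∩ ℤ^d, let (w̃_1, …, w̃_r) ∈ ℕ^r satisfy Σ_i w̃_i v_i = w, and let φ: P → k'[[t]] be a homomorphism of monoids into the multiplicative monoid of k'[[t]] such that the t-adic order of φ(u) equals u(w) for every u ∈ P. Then there exist a finite field extension k'' of k' and a monoid homomorphism ψ: F → k''[[t]] (into the multiplicative monoid) such that the t-adic order of ψ(f) equals f(w̃) for every f ∈ F, where w̃ = (w̃_1, …, w̃_r)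 ∈ ℤ^r, and ψ(u∘ν) = φ(u) in k''[[t]] for every u ∈ P. -/
/-!
Split off the `t`-adic order: `φ u = t ^ u(w) · G u` with `G` an additive map from the dual cone
`P` to the units of `k'⟦t⟧`. Because the `v i` span `ℝ^d`, `u ↦ u ∘ ν` embeds `P`, hence its
Grothendieck group, into the free lattice `Hom(ℤ^r, ℤ)`, and `G` extends to that subgroup. In a
Smith normal form basis `b'_j = a_j • b_{f j}` of the subgroup inside the lattice, extending `G`
to the whole lattice amounts to choosing `a_j`-th roots of the units `G b'_j`. By Hensel's lemma
(using characteristic `0`) such a root exists as soon as the constant coefficient has one, and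
these finitely many constants acquire roots in a finite extension `k''`. If `χ` is the resulting
character of `Hom(ℤ^r, ℤ)`, then `ψ f = t ^ f(w̃) · χ f` works, since `ν w̃ = w`.
-/

universe u

/-- A finite field extension `k''` of `k'` together
with a monoid homomorphism `ψ : F → k''[[t]]` whose `t`-adic orders are given by
pairing with `w̃` and which lifts `φ : P → k'[[t]]` along `ν*`. -/
structure ArcLiftWitness (k' : Type u) [Field k'] {d r : ℕ}
    (ν : (Fin r → ℤ) →ₗ[ℤ] (Fin d → ℤ))
    (P : Set ((Fin d → ℤ) →ₗ[ℤ] ℤ))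
    (F : Set ((Fin r → ℤ) →ₗ[ℤ] ℤ))
    (tw : Fin r → ℕ)
    (φ : ((Fin d → ℤ) →ₗ[ℤ] ℤ) → PowerSeries k') : Type (u + 1) where
  k'' : Type u
  [fieldk'' : Field k'']
  [algk'' : Algebra k' k'']
  finite : FiniteDimensional k' k''
  ψ : ((Fin r → ℤ) →ₗ[ℤ] ℤ) → PowerSeries k''
  ψ_one : ψ 0 = 1
  ψ_mul : ∀ f ∈ F, ∀ g ∈ F, ψ (f + g) = ψ f * ψ g
  ψ_order : ∀ f ∈ F, ∃ mo : ℕ,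
    (ψ f).order = mo ∧ (mo : ℤ) = f (fun i => (tw i : ℤ))
  ψ_compat : ∀ u ∈ P, ψ (u.comp ν) = PowerSeries.map (algebraMap k' k'') (φ u)

open Function

open Polynomial in
theorem exists_finiteDimensional_pow_eq_algebraMap {K : Type u} [Field K] {ι : Type*} [Fintype ι]
    (n : ι → ℕ) (hn : ∀ i, n i ≠ 0) (c : ι → K) :
    ∃ (L : Type u) (_ : Field L) (_ : Algebra K L), FiniteDimensional K L ∧
      ∀ i, ∃ δ : L, δ ^ n i = algebraMap K L (c i) := by
  obtain ⟨q, hq, hdvd⟩ : ∃ q : K[X], q ≠ 0 ∧ ∀ i, X ^ n i - C (c i) ∣ q :=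
    ⟨∏ i, (X ^ n i - C (c i)),
      (monic_prod_of_monic _ _ fun i _ => monic_X_pow_sub_C _ (hn i)).ne_zero,
      fun i => Finset.dvd_prod_of_mem (fun i => X ^ n i - C (c i)) (Finset.mem_univ i)⟩
  have hroot (i : ι) : ∃ δ : q.SplittingField, δ ^ n i = algebraMap K _ (c i) := by
    have hsplit : ((X ^ n i - C (c i)).map (algebraMap K q.SplittingField)).Splits :=
      (SplittingField.splits q).of_dvd (map_ne_zero hq)
        (map_dvd (algebraMap K q.SplittingField) (hdvd i))
    obtain ⟨δ, hδ⟩ := hsplit.exists_eval_eq_zero (by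
      rw [degree_map, degree_X_pow_sub_C (Nat.pos_of_ne_zero (hn i))]
      exact_mod_cast hn i)
    exact ⟨δ, by simpa [sub_eq_zero] using hδ⟩
  exact ⟨q.SplittingField, inferInstance, inferInstance, inferInstance, hroot⟩

open PowerSeries

namespace PowerSeries

variable {K : Type*} [Field K]

theorem exists_pow_eq_of_constantCoeff_eq_pow [CharZero K] {x : K⟦X⟧} {n : ℕ} (hn : n ≠ 0)
    {δ : K} (hδ0 : δ ≠ 0) (hδ : δ ^ n = constantCoeff x) : ∃ y : K⟦X⟧, y ^ n = x := by
  have happrox : ((Polynomial.X ^ n - Polynomial.C x).eval (C δ)) ∈ Ideal.span {X} := by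
    simp [Ideal.mem_span_singleton, X_dvd_iff, hδ]
  have hderiv : IsUnit ((Polynomial.X ^ n - Polynomial.C x).derivative.eval (C δ)) := by
    simp [isUnit_iff_constantCoeff, Polynomial.derivative_X_pow, hn, hδ0]
  obtain ⟨y, hy, -⟩ := HenselianRing.is_henselian _ (Polynomial.monic_X_pow_sub_C x hn) (C δ)
    happrox (hderiv.map _)
  exact ⟨y, by simpa [sub_eq_zero] using hy⟩

theorem exists_zpow_eq_of_constantCoeff_eq_pow [CharZero K] (x : K⟦X⟧ˣ) {z : ℤ} (hz : z ≠ 0)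
    {δ : K} (hδ : δ ^ z.natAbs = constantCoeff (x : K⟦X⟧)) : ∃ y : K⟦X⟧ˣ, y ^ z = x := by
  have hδ0 : δ ≠ 0 := by
    rintro rfl
    exact (isUnit_iff_constantCoeff.mp x.isUnit).ne_zero (by simp [← hδ, hz])
  obtain ⟨y, hy⟩ := exists_pow_eq_of_constantCoeff_eq_pow (Int.natAbs_ne_zero.mpr hz) hδ0 hδ
  have hyu : IsUnit y := (isUnit_pow_iff (Int.natAbs_ne_zero.mpr hz)).mp (hy ▸ x.isUnit)
  have hpow : hyu.unit ^ z.natAbs = x := Units.ext (by simp [hy])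
  rcases Int.natAbs_eq z with h | h
  · exact ⟨hyu.unit, by rw [h, zpow_natCast, hpow]⟩
  · exact ⟨hyu.unit⁻¹, by rw [h, inv_zpow', neg_neg, zpow_natCast, hpow]⟩

end PowerSeries

theorem Module.Basis.SmithNormalForm.a_ne_zero {R M ι : Type*} [CommRing R] [Nontrivial R]
    [AddCommGroup M] [Module R M] {N : Submodule R M} {n : ℕ}
    (snf : Module.Basis.SmithNormalForm N ι n) (j : Fin n) : snf.a j ≠ 0 := by
  intro h
  apply snf.bN.ne_zero j
  ext
  simp [snf.snf, h]

theorem Module.Basis.SmithNormalForm.exists_extend_addMonoidHom_powerSeries_units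
    {L : Type*} [Field L] [CharZero L] {Λ ι : Type*} [AddCommGroup Λ] {N : Submodule ℤ Λ}
    {n : ℕ} (snf : Module.Basis.SmithNormalForm N ι n) (χ : N →+ Additive L⟦X⟧ˣ)
    (hroot : ∀ j, ∃ δ : L, δ ^ (snf.a j).natAbs = constantCoeff ((χ (snf.bN j)).toMul : L⟦X⟧)) :
    ∃ χ' : Λ →+ Additive L⟦X⟧ˣ, χ'.comp N.subtype.toAddMonoidHom = χ := by
  classical
  choose δ hδ using hroot
  choose γ hγ using fun j => exists_zpow_eq_of_constantCoeff_eq_pow _ (snf.a_ne_zero j) (hδ j)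
  let χ' : Λ →+ Additive L⟦X⟧ˣ :=
    (snf.bM.constr ℤ fun i => Additive.ofMul (Function.extend snf.f γ 1 i)).toAddMonoidHom
  refine ⟨χ', AddMonoidHom.toIntLinearMap_injective (snf.bN.ext fun j => ?_)⟩
  simp [χ', snf.snf, snf.f.injective.extend_apply, ← ofMul_zpow, hγ]

@[to_additive]
theorem Algebra.GrothendieckGroup.lift_of {M G : Type*} [CommMonoid M] [CommGroup G]
    (f : M →* G) (m : M) : lift f (of m) = f m :=
  DFunLike.congr_fun (lift.symm_apply_apply f) m

@[to_additive]
theorem Algebra.GrothendieckGroup.lift_injective {M G : Type*} [CommMonoid M] [CommGroup G]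
    {f : M →* G} (hf : Injective f) : Injective (lift f) := by
  refine (injective_iff_map_eq_one _).2 fun x hx => ?_
  induction x using Localization.induction_on with
  | H p =>
    obtain ⟨m, s⟩ := p
    have hmk : Localization.mk m s = of m / of (s : M) := by
      rw [eq_div_iff_mul_eq', Localization.mk_eq_monoidOf_mk']
      exact (Localization.monoidOf _).mk'_spec m s
    rw [hmk, map_div, div_eq_one, lift_of, lift_of] at hx
    rw [hmk, hf hx, div_self']

open Algebra Algebra.GrothendieckAddGroup in
theorem exists_finiteDimensional_extend_addMonoidHom_powerSeries_units
    {K : Type u} [Field K] [CharZero K] {M Λ : Type*} [AddCommMonoid M] [AddCommGroup Λ]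
    [Module.Free ℤ Λ] [Module.Finite ℤ Λ] (T : M →+ Λ) (hT : Injective T)
    (χ : M →+ Additive K⟦X⟧ˣ) :
    ∃ (L : Type u) (_ : Field L) (_ : Algebra K L), FiniteDimensional K L ∧
      ∃ χ' : Λ →+ Additive L⟦X⟧ˣ,
        ∀ m, χ' (T m) = .ofMul (Units.map (map (algebraMap K L)).toMonoidHom (χ m).toMul) := by
  let e : GrothendieckAddGroup M ≃ₗ[ℤ] LinearMap.range (lift T).toIntLinearMap :=
    LinearEquiv.ofInjective _ (lift_injective hT)
  obtain ⟨n, snf⟩ := (LinearMap.range (lift T).toIntLinearMap).smithNormalForm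
    (Module.Free.chooseBasis ℤ Λ)
  let χN := (lift χ).comp e.symm.toLinearMap.toAddMonoidHom
  obtain ⟨L, _, _, hfin, hroot⟩ := exists_finiteDimensional_pow_eq_algebraMap
    (fun j => (snf.a j).natAbs) (fun j => Int.natAbs_ne_zero.mpr (snf.a_ne_zero j))
    (fun j => constantCoeff ((χN (snf.bN j)).toMul : K⟦X⟧))
  have : CharZero L := charZero_of_injective_algebraMap (algebraMap K L).injective
  -- `hroot` applies as is: `constantCoeff (map f y) = f (constantCoeff y)` holds definitionally.
  obtain ⟨χ', hχ'⟩ := snf.exists_extend_addMonoidHom_powerSeries_units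
    ((Units.map (map (algebraMap K L)).toMonoidHom).toAdditive.comp χN) hroot
  refine ⟨L, inferInstance, inferInstance, hfin, χ', fun m => ?_⟩
  have := DFunLike.congr_fun hχ' (e (of m))
  simp only [AddMonoidHom.comp_apply, LinearMap.toAddMonoidHom_coe, Submodule.coe_subtype,
    LinearEquiv.coe_coe, LinearEquiv.symm_apply_apply, lift_of, χN, e] at this
  exact (congrArg χ' (lift_of T m)).symm.trans this

theorem LinearMap.dualMap_injective_of_span_real_eq_top {ι κ : Type*} [Fintype ι]
    [DecidableEq ι] [DecidableEq κ] (ν : (κ → ℤ) →ₗ[ℤ] (ι → ℤ))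
    (h : Submodule.span ℝ (Set.range fun i j => (ν (Pi.single i 1) j : ℝ)) = ⊤) :
    Injective ν.dualMap := by
  refine (injective_iff_map_eq_zero _).2 fun u hu => ?_
  let uR : (ι → ℝ) →ₗ[ℝ] ℝ := ∑ j, (u (Pi.single j 1) : ℝ) • LinearMap.proj j
  have huR (y : ι → ℤ) : uR (fun j => (y j : ℝ)) = u y := by
    conv_rhs => rw [pi_eq_sum_univ' y, map_sum]; simp only [map_smul, smul_eq_mul]
    simp [uR, mul_comm]
  have huR0 : uR = 0 := LinearMap.ext_on_range h fun i => by
    rw [huR, ← LinearMap.dualMap_apply, hu]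
    simp
  refine (Pi.basisFun ℤ ι).ext fun j => ?_
  simpa [huR0] using (huR (Pi.single j 1)).symm

theorem Submodule.span_nonneg_combinations_eq_span_range {ι E : Type*} [Fintype ι]
    [DecidableEq ι] [AddCommGroup E] [Module ℝ E] (v : ι → E) :
    span ℝ {x | ∃ c : ι → ℝ, (∀ i, 0 ≤ c i) ∧ x = ∑ i, c i • v i} = span ℝ (Set.range v) := by
  refine le_antisymm (span_le.2 ?_) (span_le.2 ?_)
  · rintro x ⟨c, -, rfl⟩
    exact (mem_span_range_iff_exists_fun ℝ).2 ⟨c, rfl⟩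
  · rintro _ ⟨i, rfl⟩
    exact subset_span
      ⟨Pi.single i 1, (Pi.single_nonneg.2 zero_le_one : (0 : ι → ℝ) ≤ Pi.single i 1), by simp⟩

theorem LinearMap.apply_nonneg_of_nonneg {ι : Type*} [Fintype ι] [DecidableEq ι]
    (f : (ι → ℤ) →ₗ[ℤ] ℤ) (hf : ∀ i, 0 ≤ f (Pi.single i 1)) {y : ι → ℤ} (hy : 0 ≤ y) :
    0 ≤ f y := by
  rw [pi_eq_sum_univ' y, map_sum]
  exact Finset.sum_nonneg fun i _ => by
    rw [map_smul, smul_eq_mul]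
    exact mul_nonneg (hy i) (hf i)

def integralDualCone {ι : Type*} [Fintype ι] [DecidableEq ι] (σ : Set (ι → ℝ)) :
    AddSubmonoid ((ι → ℤ) →ₗ[ℤ] ℤ) where
  carrier := {u | ∀ x ∈ σ, 0 ≤ ∑ j, (u (Pi.single j 1) : ℝ) * x j}
  add_mem' hu hu' x hx := by
    simpa [add_mul, Finset.sum_add_distrib] using add_nonneg (hu x hx) (hu' x hx)
  zero_mem' _ _ := by simp

namespace PowerSeries

variable {K : Type*} [Field K]

theorem Unit_of_divided_by_X_pow_order_mul {f g : K⟦X⟧} (hf : f ≠ 0) (hg : g ≠ 0) :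
    Unit_of_divided_by_X_pow_order (f * g) =
      Unit_of_divided_by_X_pow_order f * Unit_of_divided_by_X_pow_order g :=
  Units.ext (by simp [Unit_of_divided_by_X_pow_order_nonzero, hf, hg, divXPowOrder_mul])

noncomputable def unitPartHom {M : Type*} [AddZeroClass M] (φ : M → K⟦X⟧) (hφ : ∀ m, φ m ≠ 0)
    (hφ_add : ∀ m m', φ (m + m') = φ m * φ m') : M →+ Additive K⟦X⟧ˣ :=
  AddMonoidHom.mk' (fun m => .ofMul (Unit_of_divided_by_X_pow_order (φ m))) fun m m' => by
    rw [hφ_add, Unit_of_divided_by_X_pow_order_mul (hφ m) (hφ m')]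
    rfl

theorem X_pow_order_mul_unitPartHom {M : Type*} [AddZeroClass M] (φ : M → K⟦X⟧)
    (hφ : ∀ m, φ m ≠ 0) (hφ_add : ∀ m m', φ (m + m') = φ m * φ m') (m : M) :
    X ^ (φ m).order.toNat * ((unitPartHom φ hφ hφ_add m).toMul : K⟦X⟧) = φ m := by
  rw [unitPartHom, AddMonoidHom.mk'_apply, toMul_ofMul,
    Unit_of_divided_by_X_pow_order_nonzero (hφ m), X_pow_order_mul_divXPowOrder]

theorem order_X_pow_mul_unit (n : ℕ) (g : K⟦X⟧ˣ) : (X ^ n * (g : K⟦X⟧)).order = (n : ℕ∞) := by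
  rw [order_mul, order_X_pow, order_zero_of_unit g.isUnit, add_zero]

end PowerSeries

noncomputable def ArcLiftWitness.ofCharacter {k' : Type u} [Field k'] {d r : ℕ}
    {ν : (Fin r → ℤ) →ₗ[ℤ] (Fin d → ℤ)} {P : Set ((Fin d → ℤ) →ₗ[ℤ] ℤ)} (tw : Fin r → ℕ)
    {φ : ((Fin d → ℤ) →ₗ[ℤ] ℤ) → k'⟦X⟧} (L : Type u) [Field L] [Algebra k' L]
    [FiniteDimensional k' L] (χ : ((Fin r → ℤ) →ₗ[ℤ] ℤ) →+ Additive L⟦X⟧ˣ)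
    (hχ : ∀ u ∈ P, X ^ (u (ν fun i => (tw i : ℤ))).toNat * ((χ (u.comp ν)).toMul : L⟦X⟧) =
      map (algebraMap k' L) (φ u)) :
    ArcLiftWitness k' ν P {f | ∀ i, 0 ≤ f (Pi.single i 1)} tw φ :=
  have htw (f : (Fin r → ℤ) →ₗ[ℤ] ℤ) (hf : ∀ i, 0 ≤ f (Pi.single i 1)) :
      0 ≤ f fun i => (tw i : ℤ) :=
    f.apply_nonneg_of_nonneg hf fun i => Int.natCast_nonneg _
  { k'' := L
    finite := inferInstance
    ψ f := X ^ (f fun i => (tw i : ℤ)).toNat * ((χ f).toMul : L⟦X⟧)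
    ψ_one := by simp
    ψ_mul f hf g hg := by
      rw [LinearMap.add_apply, Int.toNat_add (htw f hf) (htw g hg), map_add, toMul_add,
        Units.val_mul, pow_add]
      ring
    ψ_order f hf := ⟨_, order_X_pow_mul_unit _ _, Int.toNat_of_nonneg (htw f hf)⟩
    ψ_compat := hχ }

theorem stmt13_general (k' : Type u) [Field k'] [CharZero k']
    (d r : ℕ) (v : Fin r → Fin d → ℤ)
    (σ : Set (Fin d → ℝ))
    (hσ : σ = {x | ∃ c : Fin r → ℝ, (∀ i, 0 ≤ c i) ∧
      x = ∑ i, c i • (fun j => (v i j : ℝ))})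
    (hfull : Submodule.span ℝ σ = ⊤)
    (ν : (Fin r → ℤ) →ₗ[ℤ] (Fin d → ℤ))
    (hν : ∀ i, ν (Pi.single i 1) = v i)
    (P : Set ((Fin d → ℤ) →ₗ[ℤ] ℤ))
    (hP : P = {u | ∀ x ∈ σ, 0 ≤ ∑ j, (u (Pi.single j 1) : ℝ) * x j})
    (F : Set ((Fin r → ℤ) →ₗ[ℤ] ℤ))
    (hF : F = {f | ∀ i, 0 ≤ f (Pi.single i 1)})
    (w : Fin d → ℤ)
    (tw : Fin r → ℕ) (htw : ∑ i, (tw i : ℤ) • v i = w)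
    (φ : ((Fin d → ℤ) →ₗ[ℤ] ℤ) → PowerSeries k')
    (hφ_mul : ∀ u ∈ P, ∀ u' ∈ P, φ (u + u') = φ u * φ u')
    (hφ_order : ∀ u ∈ P, ∃ mo : ℕ, (φ u).order = mo ∧ (mo : ℤ) = u w) :
    Nonempty (ArcLiftWitness k' ν P F tw φ) := by
  have hspan : Submodule.span ℝ (Set.range fun i j => (ν (Pi.single i 1) j : ℝ)) = ⊤ := by
    simpa [hσ, hν, Submodule.span_nonneg_combinations_eq_span_range] using hfull
  have hνtw : ν (fun i => (tw i : ℤ)) = w := by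
    rw [pi_eq_sum_univ' (fun i => (tw i : ℤ)), map_sum]
    simpa only [map_smul, hν] using htw
  subst hP hF
  have hφ_ne (p : integralDualCone σ) : φ p ≠ 0 := by
    obtain ⟨mo, hmo, -⟩ := hφ_order p p.2
    rintro h
    simp [h] at hmo
  have hφ_add (p p' : integralDualCone σ) : φ ↑(p + p') = φ p * φ p' := hφ_mul p p.2 p' p'.2
  let G := unitPartHom _ hφ_ne hφ_add
  obtain ⟨L, _, _, _, χ, hχ⟩ := exists_finiteDimensional_extend_addMonoidHom_powerSeries_units
    (ν.dualMap.toAddMonoidHom.comp (integralDualCone σ).subtype)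
    ((ν.dualMap_injective_of_span_real_eq_top hspan).comp Subtype.val_injective) G
  refine ⟨ArcLiftWitness.ofCharacter tw L χ fun u hu => ?_⟩
  obtain ⟨mo, hmo, hmow⟩ := hφ_order u hu
  have hsplit : X ^ mo * ((G ⟨u, hu⟩).toMul : k'⟦X⟧) = φ u := by
    simpa [hmo] using X_pow_order_mul_unitPartHom _ hφ_ne hφ_add ⟨u, hu⟩
  rw [show χ (u.comp ν) = _ from hχ ⟨u, hu⟩, hνtw, ← hmow, Int.toNat_natCast, ← hsplit]
  simp

/-- Over a characteristic-zero field `k'`, given a salient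
full-dimensional cone generated by nonzero `v₁, …, v_r ∈ ℤ^d`, a lattice point
`w ∈ σ ∩ ℤ^d`, a lift `w̃ ∈ ℕ^r` of `w`, and a monoid homomorphism
`φ : P → k'[[t]]` with `ord_t φ(u) = u(w)`, there is a finite extension `k''/k'`
and a monoid homomorphism `ψ : F → k''[[t]]` with `ord_t ψ(f) = f(w̃)` lifting
`φ` along `ν*`. -/
theorem stmt13 (k' : Type u) [Field k'] [CharZero k']
    (d r : ℕ) (v : Fin r → Fin d → ℤ) (hv : ∀ i, v i ≠ 0)
    (σ : Set (Fin d → ℝ))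
    (hσ : σ = {x | ∃ c : Fin r → ℝ, (∀ i, 0 ≤ c i) ∧
      x = ∑ i, c i • (fun j => (v i j : ℝ))})
    (hsalient : ∀ x ∈ σ, -x ∈ σ → x = 0)
    (hfull : Submodule.span ℝ σ = ⊤)
    (ν : (Fin r → ℤ) →ₗ[ℤ] (Fin d → ℤ))
    (hν : ∀ i, ν (Pi.single i 1) = v i)
    (P : Set ((Fin d → ℤ) →ₗ[ℤ] ℤ))
    (hP : P = {u | ∀ x ∈ σ, 0 ≤ ∑ j, (u (Pi.single j 1) : ℝ) * x j})
    (F : Set ((Fin r → ℤ) →ₗ[ℤ] ℤ))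
    (hF : F = {f | ∀ i, 0 ≤ f (Pi.single i 1)})
    (w : Fin d → ℤ) (hwσ : (fun j => (w j : ℝ)) ∈ σ)
    (tw : Fin r → ℕ) (htw : ∑ i, (tw i : ℤ) • v i = w)
    (φ : ((Fin d → ℤ) →ₗ[ℤ] ℤ) → PowerSeries k')
    (hφ_one : φ 0 = 1)
    (hφ_mul : ∀ u ∈ P, ∀ u' ∈ P, φ (u + u') = φ u * φ u')
    (hφ_order : ∀ u ∈ P, ∃ mo : ℕ, (φ u).order = mo ∧ (mo : ℤ) = u w) :
    Nonempty (ArcLiftWitness k' ν P F tw φ) :=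
  stmt13_general k' d r v σ hσ hfull ν hν P hP F hF w tw htw φ hφ_mul hφ_order
end
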